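/- arXiv:2509.26237 — 8 statements merged into one kernel-verified Lean document; each statement's English description precedes it below -/
import Mathlib

section
/- For every field K and every integer n ≥ 2, where additionally n ≥ 3 if K has exactly two elements, there exists a monic polynomial q ∈ K[x] of degree n with q(0) ≠ 0 such that q is coprime to its reciprocal polynomial q*. -/
open Polynomial

noncomputable section

/-- The reciprocal polynomial `q*(x) = q(0)⁻¹ xⁿ q(1/x)` of a polynomial `q`. -/
def recipPoly {K : Type*} [Field K] (q : Polynomial K) : Polynomial K :=
  Polynomial.C (q.coeff 0)⁻¹ * q.reverse

section Aux

variable {K : Type*} [Field K]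

lemma copC (q : Polynomial K) {u : K} (hu : u ≠ 0) : IsCoprime q (C u) :=
  ⟨0, C u⁻¹, by simp [← C_mul, inv_mul_cancel₀ hu]⟩

lemma copX {q : Polynomial K} (h : q.coeff 0 ≠ 0) : IsCoprime q X :=
  ((Polynomial.prime_X.coprime_iff_not_dvd).2
    (fun hd => h (Polynomial.X_dvd_iff.1 hd))).symm

lemma copRoot {q : Polynomial K} {r : K} (h : q.eval r ≠ 0) : IsCoprime q (X - C r) :=
  (((Polynomial.prime_X_sub_C r).coprime_iff_not_dvd).2
    (fun hd => h (Polynomial.dvd_iff_isRoot.1 hd))).symm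

lemma copRecip {q d : Polynomial K} (h : recipPoly q = d + q * 1)
    (hc : IsCoprime q d) : IsCoprime q (recipPoly q) := by
  rw [h]; exact hc.add_mul_left_right 1

lemma tri_facts (b c : K) {n a : ℕ} (ha : 0 < a) (han : a < n) :
    (X ^ n + (C b * X ^ a + C c) : K[X]).Monic ∧
      (X ^ n + (C b * X ^ a + C c) : K[X]).natDegree = n ∧
      (X ^ n + (C b * X ^ a + C c) : K[X]).coeff 0 = c ∧
      (X ^ n + (C b * X ^ a + C c) : K[X]).reverse
        = 1 + (C b * X ^ (n - a) + C c * X ^ n) := by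
  have hn0 : 0 < n := ha.trans han
  have hdlt : (C b * X ^ a + C c : K[X]).degree < (n : ℕ) := by
    apply lt_of_le_of_lt (degree_add_le _ _)
    apply max_lt
    · exact lt_of_le_of_lt (degree_C_mul_X_pow_le _ _) (by exact_mod_cast han)
    · exact lt_of_le_of_lt degree_C_le (by exact_mod_cast hn0)
  have hmonic : (X ^ n + (C b * X ^ a + C c) : K[X]).Monic := monic_X_pow_add hdlt
  have hdeg : (X ^ n + (C b * X ^ a + C c) : K[X]).degree = n := by
    rw [degree_add_eq_left_of_degree_lt, degree_X_pow]
    rwa [degree_X_pow]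
  have hnat : (X ^ n + (C b * X ^ a + C c) : K[X]).natDegree = n :=
    natDegree_eq_of_degree_eq_some hdeg
  refine ⟨hmonic, hnat, ?_, ?_⟩
  · simp [coeff_X_pow, coeff_C, hn0.ne, ha.ne]
  · rw [reverse, hnat, reflect_add, reflect_add, reflect_monomial,
      reflect_C_mul_X_pow, reflect_C, revAt_le han.le, revAt_le (le_refl n),
      Nat.sub_self, pow_zero]

end Aux

theorem exists_monic_coprime_to_reciprocal {K : Type*} [Field K] {n : ℕ}
    (hn : 2 ≤ n) (hK : Nat.card K = 2 → 3 ≤ n) :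
    ∃ q : Polynomial K, q.Monic ∧ q.natDegree = n ∧ q.coeff 0 ≠ 0 ∧
      IsCoprime q (recipPoly q) := by
  rcases Nat.even_or_odd n with hev | hodd
  · -- n even
    obtain ⟨a, hna⟩ := hev
    have hna : n = 2 * a := by omega
    by_cases h2 : (2 : K) = 0
    · -- characteristic 2
      by_cases hc : ∃ c : K, c ≠ 0 ∧ c * c ≠ 1
      · -- q = X^n + c with c ≠ 0, c² ≠ 1
        obtain ⟨c, hc0, hc1⟩ := hc
        have h1n : 1 < n := hn
        obtain ⟨hmon, hnat, hc0', hrev⟩ := tri_facts (0 : K) c one_pos h1n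
        refine ⟨X ^ n + (C 0 * X ^ 1 + C c), hmon, hnat, by rw [hc0']; exact hc0, ?_⟩
        apply copRecip (d := C (c⁻¹ - c))
        · rw [recipPoly, hc0', hrev]
          have h1 : (C c⁻¹ * C c : K[X]) = 1 := by
            rw [← C_mul, inv_mul_cancel₀ hc0, map_one]
          simp only [map_zero, zero_mul, map_sub]
          linear_combination (X : K[X]) ^ n * h1
        · refine copC _ (sub_ne_zero_of_ne ?_)
          intro h
          apply hc1
          calc c * c = c⁻¹ * c := by rw [h]
          _ = 1 := inv_mul_cancel₀ hc0
      · -- K = 𝔽₂, so n ≥ 4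
        push_neg at hc
        have hall : ∀ x : K, x = 0 ∨ x = 1 := by
          intro x
          rcases eq_or_ne x 0 with h | h
          · exact Or.inl h
          · refine Or.inr ?_
            have hx2 := hc x h
            have h0 : (x - 1) * (x - 1) = 0 := by linear_combination hx2 - x * h2 + h2
            exact sub_eq_zero.1 (mul_self_eq_zero.1 h0)
        have hcard : Nat.card K = 2 := by
          rw [Nat.card_eq_two_iff]
          refine ⟨0, 1, zero_ne_one, ?_⟩
          rw [Set.eq_univ_iff_forall]
          intro x
          rcases hall x with h | h <;> simp [h]
        have hn4 : 4 ≤ n := by have := hK hcard; omega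
        -- q = X^n + X^(m+3) + 1, n = 2m+4
        obtain ⟨m, hm⟩ : ∃ m, n = 2 * m + 4 := ⟨a - 2, by omega⟩
        have haan : m + 3 < n := by omega
        obtain ⟨hmon, hnat, hc0', hrev⟩ :=
          tri_facts (1 : K) 1 (show 0 < m + 3 by omega) haan
        have hneg1 : (-1 : K) = 1 := by linear_combination -h2
        have heval1 : (X ^ n + (C 1 * X ^ (m + 3) + C 1) : K[X]).eval 1 ≠ 0 := by
          simp only [eval_add, eval_mul, eval_pow, eval_X, eval_C, eval_one, one_pow,
            map_one, one_mul, mul_one]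
          intro h
          apply one_ne_zero (α := K)
          linear_combination h - h2
        refine ⟨_, hmon, hnat, by rw [hc0']; exact one_ne_zero, ?_⟩
        apply copRecip
          (d := C (-1 : K) * (X ^ (m + 1) * ((X - C 1) * (X - C (-1)))))
        · rw [recipPoly, hc0', hrev, show n - (m + 3) = m + 1 by omega, hm]
          simp only [map_one, map_neg, inv_one]
          ring
        · refine (copC _ (neg_ne_zero.2 one_ne_zero)).mul_right ?_
          refine ((copX (by rw [hc0']; exact one_ne_zero)).pow_right).mul_right ?_
          refine (copRoot heval1).mul_right (copRoot ?_)
          rw [hneg1]; exact heval1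
    · -- 2 ≠ 0 : q = X^n + X^a - 1, n = 2a
      have ha1 : 0 < a := by omega
      have han : a < n := by omega
      obtain ⟨hmon, hnat, hc0', hrev⟩ := tri_facts (1 : K) (-1) ha1 han
      refine ⟨_, hmon, hnat, by rw [hc0']; exact neg_ne_zero.2 one_ne_zero, ?_⟩
      apply copRecip (d := C (-2 : K) * X ^ a)
      · rw [recipPoly, hc0', hrev, show n - a = a by omega, hna]
        simp only [map_one, map_neg, inv_neg, inv_one, map_ofNat]
        ring
      · exact (copC _ (neg_ne_zero.2 h2)).mul_right
          ((copX (by rw [hc0']; exact neg_ne_zero.2 one_ne_zero)).pow_right)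
  · -- n odd : q = X^n + (-1)^(m+1) X^(m+1) - 1, n = 2m+1
    obtain ⟨m, hm⟩ := hodd
    have hm1 : 1 ≤ m := by omega
    have han : m + 1 < n := by omega
    obtain ⟨hmon, hnat, hc0', hrev⟩ :=
      tri_facts ((-1 : K) ^ (m + 1)) (-1) (show 0 < m + 1 by omega) han
    have hsq : ((-1 : K) ^ (m + 1)) * ((-1 : K) ^ (m + 1)) = 1 := by
      rw [← pow_add]; exact Even.neg_one_pow ⟨m + 1, rfl⟩
    have heval : (X ^ n + (C ((-1 : K) ^ (m + 1)) * X ^ (m + 1) + C (-1)) : K[X]).eval (-1)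
        = -1 := by
      simp only [eval_add, eval_mul, eval_pow, eval_X, eval_C]
      rw [hm, Odd.neg_one_pow ⟨m, by ring⟩]
      rw [hsq]
      ring
    refine ⟨_, hmon, hnat, by rw [hc0']; exact neg_ne_zero.2 one_ne_zero, ?_⟩
    apply copRecip
      (d := C (-((-1 : K) ^ (m + 1))) * (X ^ m * (X - C (-1))))
    · rw [recipPoly, hc0', hrev, show n - (m + 1) = m by omega, hm]
      simp only [map_neg, map_one, inv_neg, inv_one, map_pow]
      ring
    · refine (copC _ (neg_ne_zero.2 (pow_ne_zero _ (neg_ne_zero.2 one_ne_zero)))).mul_right ?_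
      refine ((copX (by rw [hc0']; exact neg_ne_zero.2 one_ne_zero)).pow_right).mul_right ?_
      exact copRoot (by rw [heval]; exact neg_ne_zero.2 one_ne_zero)
end
end

section
/- Let K be a field and n ≥ 2. Let A, B ∈ GL(n, K) be cyclic matrices with det A · det B = 1, and suppose B is not conjugate (similar) to A⁻¹. Then there exist X, Y ∈ GL(n, K) such that the product (X A X⁻¹) · (Y B Y⁻¹) is a transvection. -/
open Matrix Polynomial

noncomputable section

/-- A matrix is cyclic if its characteristic polynomial equals its minimal polynomial. -/
def IsCyclicMat {ι : Type*} [Fintype ι] [DecidableEq ι] {K : Type*} [Field K]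
    (A : Matrix ι ι K) : Prop :=
  A.charpoly = minpoly K A

/-- A matrix is nonprimary if its characteristic polynomial is a product of two
coprime nonconstant monic polynomials. -/
def IsNonprimary {ι : Type*} [Fintype ι] [DecidableEq ι] {K : Type*} [Field K]
    (M : Matrix ι ι K) : Prop :=
  ∃ f g : Polynomial K, f.Monic ∧ g.Monic ∧ 0 < f.natDegree ∧ 0 < g.natDegree ∧
    IsCoprime f g ∧ M.charpoly = f * g

/-- A transvection: `T ≠ 1`, `(T - 1)² = 0` and `rank (T - 1) = 1`. -/
def IsTransvection {ι : Type*} [Fintype ι] [DecidableEq ι] {K : Type*} [Field K]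
    (T : Matrix ι ι K) : Prop :=
  T ≠ 1 ∧ (T - 1) * (T - 1) = 0 ∧ (T - 1).rank = 1

namespace ProdCyc

/-- The companion matrix of a polynomial. -/
def cmpn (n : ℕ) {K : Type*} [Field K] (f : K[X]) : Matrix (Fin n) (Fin n) K :=
  Matrix.of fun i j =>
    (if (i : ℕ) = (j : ℕ) + 1 then (1 : K) else 0) +
      (if (j : ℕ) = n - 1 then -f.coeff i else 0)

variable {K : Type*} [Field K] {n : ℕ}

lemma kill_mono (M : Matrix (Fin n) (Fin n) K) {a b : K[X]} {x : Fin n → K}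
    (hab : a ∣ b) (hx : (aeval M a) *ᵥ x = 0) : (aeval M b) *ᵥ x = 0 := by
  obtain ⟨c, rfl⟩ := hab
  rw [mul_comm, _root_.map_mul, ← Matrix.mulVec_mulVec, hx, Matrix.mulVec_zero]

open UniqueFactorizationMonoid in
lemma exists_maxVec (M : Matrix (Fin n) (Fin n) K) :
    ∃ v : Fin n → K, ∀ p : K[X], (aeval M p) *ᵥ v = 0 → minpoly K M ∣ p := by
  classical
  have hint : IsIntegral K M := .of_finite K M
  set m := minpoly K M with hmdef
  have hm0 : m ≠ 0 := minpoly.ne_zero hint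
  set S := (normalizedFactors m).toFinset with hS
  have hprime : ∀ p ∈ S, Prime p := fun p hp =>
    prime_of_normalized_factor p (Multiset.mem_toFinset.mp hp)
  set e : K[X] → ℕ := fun p => (normalizedFactors m).count p with he
  have hmon : ∀ p ∈ normalizedFactors m, p.Monic := by
    intro p hp
    have h1 := normalize_normalized_factor p hp
    have h2 : p ≠ 0 := (prime_of_normalized_factor p hp).ne_zero
    have := Polynomial.monic_normalize (p := p) h2
    rwa [h1] at this
  have hpm : (normalizedFactors m).prod.Monic := by
    have := Polynomial.monic_multiset_prod_of_monic (normalizedFactors m) id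
      (by simpa using hmon)
    simpa using this
  have hprodeq : (normalizedFactors m).prod = m :=
    Polynomial.eq_of_monic_of_associated hpm (minpoly.monic hint) (prod_normalizedFactors hm0)
  have hmprod : (∏ p ∈ S, p ^ e p) = m := by
    rw [← hprodeq, Finset.prod_multiset_count]
  set Q : K[X] → K[X] := fun p => ∏ r ∈ S.erase p, r ^ e r with hQ
  have hQm : ∀ p ∈ S, p ^ e p * Q p = m := by
    intro p hp
    show p ^ e p * ∏ r ∈ S.erase p, r ^ e r = m
    rw [← hmprod]
    exact Finset.mul_prod_erase S (fun r => r ^ e r) hp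
  have hnd : ∀ p ∈ S, ∀ r ∈ S, p ≠ r → ¬ p ∣ r := by
    intro p hp r hr hne hdvd
    have hassoc := (hprime p hp).irreducible.associated_of_dvd (hprime r hr).irreducible hdvd
    have : normalize p = normalize r := normalize_eq_normalize hassoc.dvd hassoc.symm.dvd
    rw [normalize_normalized_factor p (Multiset.mem_toFinset.mp hp),
      normalize_normalized_factor r (Multiset.mem_toFinset.mp hr)] at this
    exact hne this
  have hcop : ∀ p ∈ S, ∀ r ∈ S, p ≠ r → IsCoprime (p ^ e p) (r ^ e r) := by
    intro p hp r hr hne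
    exact (((hprime p hp).irreducible.coprime_iff_not_dvd.mpr (hnd p hp r hr hne))).pow
  have hcopQ : ∀ p ∈ S, IsCoprime (p ^ e p) (Q p) := by
    intro p hp
    exact IsCoprime.prod_right fun r hr =>
      hcop p hp r (Finset.mem_of_mem_erase hr) (Ne.symm (Finset.ne_of_mem_erase hr))
  -- the "small" polynomial does not annihilate M
  have hwex : ∀ p ∈ S, ∃ w : Fin n → K,
      (aeval M (p ^ (e p - 1) * Q p)) *ᵥ w ≠ 0 := by
    intro p hp
    have hep : 1 ≤ e p := by
      have := Multiset.mem_toFinset.mp hp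
      exact Multiset.one_le_count_iff_mem.mpr this
    set q := p ^ (e p - 1) * Q p with hq
    have hpq : p * q = m := by
      rw [hq, ← mul_assoc, ← pow_succ', Nat.sub_add_cancel hep]
      exact hQm p hp
    have hq0 : q ≠ 0 := by
      intro h
      rw [h, mul_zero] at hpq
      exact hm0 hpq.symm
    have hp0 : p ≠ 0 := (hprime p hp).ne_zero
    have hpdeg : 0 < p.natDegree := (hprime p hp).irreducible.natDegree_pos
    have hdeg : q.natDegree < m.natDegree := by
      have : m.natDegree = p.natDegree + q.natDegree := by
        rw [← hpq, Polynomial.natDegree_mul hp0 hq0]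
      omega
    have hqM : aeval M q ≠ 0 := by
      intro h
      have hdvd : m ∣ q := minpoly.dvd K M h
      have := Polynomial.natDegree_le_of_dvd hdvd hq0
      omega
    by_contra hcon
    push_neg at hcon
    apply hqM
    ext i j
    simpa using congrFun (hcon (Pi.single j 1)) i
  choose w hw using hwex
  refine ⟨∑ p ∈ S.attach, (aeval M (Q p.1)) *ᵥ w p.1 p.2, fun r hr => ?_⟩
  rw [← hmprod]
  refine Finset.prod_dvd_of_coprime (fun p hp q hq hne => hcop p hp q hq hne) (fun p hp => ?_)
  -- each `vp'` is killed by `m`-multiples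
  have hkill : ∀ (p' : K[X]) (hp' : p' ∈ S),
      (aeval M (p' ^ e p' * Q p')) *ᵥ (w p' hp') = 0 := by
    intro p' hp'
    rw [hQm p' hp']
    show (aeval M (minpoly K M)) *ᵥ _ = 0
    rw [minpoly.aeval, Matrix.zero_mulVec]
  have hsum : (aeval M (r * Q p)) *ᵥ (∑ p' ∈ S.attach, (aeval M (Q p'.1)) *ᵥ w p'.1 p'.2) =
      ∑ p' ∈ S.attach, (aeval M (r * Q p)) *ᵥ ((aeval M (Q p'.1)) *ᵥ w p'.1 p'.2) := by
    rw [← Matrix.mulVecLin_apply, map_sum]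
    simp [Matrix.mulVecLin_apply, mul_assoc]
  have hzero : ∀ p' ∈ S.attach, p' ≠ (⟨p, hp⟩ : {x // x ∈ S}) →
      (aeval M (r * Q p)) *ᵥ ((aeval M (Q p'.1)) *ᵥ w p'.1 p'.2) = 0 := by
    intro p' _ hne
    have hne' : p'.1 ≠ p := fun h => hne (Subtype.ext h)
    rw [Matrix.mulVec_mulVec, ← _root_.map_mul]
    refine kill_mono M ?_ (hkill p'.1 p'.2)
    have h1 : p'.1 ^ e p'.1 ∣ Q p :=
      Finset.dvd_prod_of_mem (fun r => r ^ e r) (Finset.mem_erase.mpr ⟨hne', p'.2⟩)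
    exact mul_dvd_mul (h1.trans (dvd_mul_left _ _)) dvd_rfl
  have hsingle : (aeval M (r * Q p)) *ᵥ ((aeval M (Q p)) *ᵥ w p hp) = 0 := by
    have h0 : (aeval M (r * Q p)) *ᵥ
        (∑ p' ∈ S.attach, (aeval M (Q p'.1)) *ᵥ w p'.1 p'.2) = 0 := by
      rw [mul_comm, _root_.map_mul, ← Matrix.mulVec_mulVec, hr, Matrix.mulVec_zero]
    rw [hsum, Finset.sum_eq_single_of_mem (⟨p, hp⟩ : {x // x ∈ S})
      (Finset.mem_attach _ _) hzero] at h0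
    exact h0
  set vp := (aeval M (Q p)) *ᵥ w p hp with hvp
  set I : Ideal K[X] :=
    { carrier := {q | (aeval M q) *ᵥ vp = 0}
      add_mem' := fun {a b} ha hb => by
        simp only [Set.mem_setOf_eq] at *
        rw [map_add, Matrix.add_mulVec, ha, hb, add_zero]
      zero_mem' := by simp
      smul_mem' := fun c q hq => by
        simp only [Set.mem_setOf_eq, smul_eq_mul] at *
        rw [_root_.map_mul, ← Matrix.mulVec_mulVec, hq, Matrix.mulVec_zero] } with hI
  have hImem : ∀ q : K[X], q ∈ I ↔ (aeval M q) *ᵥ vp = 0 := fun q => Iff.rfl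
  obtain ⟨γ, hγ⟩ := (IsPrincipalIdealRing.principal I)
  have hIm : ∀ q, q ∈ I ↔ γ ∣ q := by
    intro q
    rw [hγ]
    exact Ideal.mem_span_singleton
  have hmem1 : p ^ e p ∈ I := by
    rw [hImem, hvp, Matrix.mulVec_mulVec, ← _root_.map_mul]
    exact hkill p hp
  have hmem2 : p ^ (e p - 1) ∉ I := by
    rw [hImem, hvp, Matrix.mulVec_mulVec, ← _root_.map_mul]
    exact hw p hp
  have hmem3 : r * Q p ∈ I := hsingle
  obtain ⟨j, hj, hassoc⟩ := (dvd_prime_pow (hprime p hp) (e p)).mp ((hIm _).mp hmem1)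
  have hj2 : j = e p := by
    by_contra hne
    have hjle : j ≤ e p - 1 := by omega
    exact hmem2 ((hIm _).mpr (hassoc.dvd.trans (pow_dvd_pow p hjle)))
  subst hj2
  exact (hcopQ p hp).dvd_of_dvd_mul_right (hassoc.symm.dvd.trans ((hIm _).mp hmem3))

lemma spans_of_maxVec (hn : 0 < n) (M : Matrix (Fin n) (Fin n) K)
    (hdeg : (minpoly K M).natDegree = n) (v : Fin n → K)
    (hv : ∀ p : K[X], (aeval M p) *ᵥ v = 0 → minpoly K M ∣ p) :
    ⊤ ≤ Submodule.span K (Set.range fun i : Fin n => (M ^ (i : ℕ)) *ᵥ v) := by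
  classical
  have hint : IsIntegral K M := .of_finite K M
  have hli : LinearIndependent K (fun i : Fin n => (M ^ (i : ℕ)) *ᵥ v) := by
    rw [Fintype.linearIndependent_iff]
    intro c hc
    set p : K[X] := ∑ i : Fin n, monomial (i : ℕ) (c i) with hp
    have hco : ∀ i : Fin n, p.coeff (i : ℕ) = c i := by
      intro i
      rw [hp, Polynomial.finset_sum_coeff]
      rw [Finset.sum_eq_single i]
      · simp
      · intro j _ hji
        rw [Polynomial.coeff_monomial]
        rw [if_neg (fun h => hji (Fin.ext h))]
      · simp
    have hpv : (aeval M p) *ᵥ v = 0 := by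
      have h1 : aeval M p = ∑ i : Fin n, c i • M ^ (i : ℕ) := by
        rw [hp, map_sum]
        refine Finset.sum_congr rfl fun i _ => ?_
        rw [Polynomial.aeval_monomial, Algebra.smul_def]
      rw [h1]
      have h2 : (∑ i : Fin n, c i • M ^ (i : ℕ)) *ᵥ v
          = ∑ i : Fin n, (c i • M ^ (i : ℕ)) *ᵥ v := by
        induction (Finset.univ : Finset (Fin n)) using Finset.induction with
        | empty => simp [Matrix.zero_mulVec]
        | insert _ _ hx ih => simp [Finset.sum_insert hx, Matrix.add_mulVec, ih]
      rw [h2, ← hc]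
      refine Finset.sum_congr rfl fun i _ => ?_
      rw [Matrix.smul_mulVec]
    have hdvd := hv p hpv
    have hp0 : p = 0 := by
      by_contra h0
      have h1 := Polynomial.natDegree_le_of_dvd hdvd h0
      have h2 : p.natDegree < n := by
        have : p.natDegree ≤ n - 1 := by
          refine Polynomial.natDegree_sum_le_of_forall_le _ _ fun i _ => ?_
          exact (Polynomial.natDegree_monomial_le _).trans (by omega)
        omega
      omega
    intro i
    rw [← hco i, hp0, Polynomial.coeff_zero]
  have hcard : Fintype.card (Fin n) = Module.finrank K (Fin n → K) := by
    simp
  haveI : Nonempty (Fin n) := ⟨⟨0, hn⟩⟩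
  rw [← (basisOfLinearIndependentOfCardEqFinrank hli hcard).span_eq,
    coe_basisOfLinearIndependentOfCardEqFinrank]

lemma spans_inv (M : Matrix (Fin n) (Fin n) K) (hM : IsUnit M.det) (v : Fin n → K)
    (hv : ⊤ ≤ Submodule.span K (Set.range fun i : Fin n => (M ^ (i : ℕ)) *ᵥ v)) :
    ⊤ ≤ Submodule.span K (Set.range fun i : Fin n => (M⁻¹ ^ (i : ℕ)) *ᵥ v) := by
  classical
  set N := M⁻¹ ^ (n - 1) with hN
  have hMk : ∀ k : ℕ, IsUnit ((M ^ k).det) := by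
    intro k; rw [Matrix.det_pow]; exact hM.pow k
  -- N *ᵥ (M ^ i *ᵥ v) = M⁻¹ ^ (n - 1 - i) *ᵥ v  for i < n
  have hkey : ∀ i : Fin n, N *ᵥ ((M ^ (i : ℕ)) *ᵥ v) = (M⁻¹ ^ (n - 1 - (i : ℕ))) *ᵥ v := by
    intro i
    rw [Matrix.mulVec_mulVec]
    congr 1
    have hi : (i : ℕ) ≤ n - 1 := by omega
    have h1 : M⁻¹ ^ (n - 1) = M⁻¹ ^ (n - 1 - (i : ℕ)) * M⁻¹ ^ (i : ℕ) := by
      rw [← pow_add]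
      congr 1
      omega
    have h2 : M⁻¹ ^ (i : ℕ) * M ^ (i : ℕ) = 1 := by
      rw [Matrix.inv_pow', Matrix.nonsing_inv_mul _ (hMk _)]
    rw [hN, h1, mul_assoc, h2, mul_one]
  -- surjectivity of mulVecLin N
  have hsurj : Function.Surjective (Matrix.mulVecLin N) := by
    intro y
    refine ⟨(M ^ (n - 1)) *ᵥ y, ?_⟩
    rw [Matrix.mulVecLin_apply, Matrix.mulVec_mulVec, hN, Matrix.inv_pow',
      Matrix.nonsing_inv_mul _ (hMk _), Matrix.one_mulVec]
  have h1 : Submodule.map (Matrix.mulVecLin N)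
      (Submodule.span K (Set.range fun i : Fin n => (M ^ (i : ℕ)) *ᵥ v)) = ⊤ := by
    have : Submodule.span K (Set.range fun i : Fin n => (M ^ (i : ℕ)) *ᵥ v) = ⊤ :=
      top_le_iff.mp hv
    rw [this, Submodule.map_top, LinearMap.range_eq_top.mpr hsurj]
  rw [Submodule.map_span, ← Set.range_comp] at h1
  rw [← h1]
  apply Submodule.span_mono
  rintro x ⟨i, rfl⟩
  refine ⟨⟨n - 1 - (i : ℕ), by omega⟩, ?_⟩
  simp only [Function.comp_apply, Matrix.mulVecLin_apply]
  exact (hkey i).symm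

lemma conj_cmpn (M : Matrix (Fin n) (Fin n) K) (v : Fin n → K)
    (hv : ⊤ ≤ Submodule.span K (Set.range fun i : Fin n => (M ^ (i : ℕ)) *ᵥ v)) :
    ∃ P : Matrix (Fin n) (Fin n) K, IsUnit P.det ∧ M = P * cmpn n M.charpoly * P⁻¹ := by
  classical
  have hcard : Fintype.card (Fin n) = Module.finrank K (Fin n → K) := by simp
  set b := basisOfTopLeSpanOfCardEqFinrank _ hv hcard with hbdef
  have hb : ⇑b = fun i : Fin n => (M ^ (i : ℕ)) *ᵥ v :=
    coe_basisOfTopLeSpanOfCardEqFinrank _ hv hcard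
  set P : Matrix (Fin n) (Fin n) K := (Pi.basisFun K (Fin n)).toMatrix ⇑b with hP
  have : Invertible P := (Pi.basisFun K (Fin n)).invertibleToMatrix b
  have hdetP : IsUnit P.det := (Matrix.isUnit_iff_isUnit_det _).mp (isUnit_of_invertible P)
  have hPapp : ∀ i j, P i j = ((M ^ (j : ℕ)) *ᵥ v) i := by
    intro i j
    rw [hP, Module.Basis.toMatrix_apply, Pi.basisFun_repr, hb]
  -- Cayley-Hamilton in expanded form
  have hCH : M ^ n = -∑ k : Fin n, (M.charpoly.coeff (k : ℕ)) • M ^ (k : ℕ) := by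
    have h0 := M.aeval_self_charpoly
    rw [(M.charpoly_monic).as_sum] at h0
    rw [map_add, map_pow, aeval_X, map_sum] at h0
    simp only [_root_.map_mul, aeval_C, map_pow, aeval_X] at h0
    have hdim : M.charpoly.natDegree = n := by simp [Matrix.charpoly_natDegree_eq_dim]
    rw [hdim] at h0
    have h1 : ∑ i ∈ Finset.range n, algebraMap K _ (M.charpoly.coeff i) * M ^ i
        = ∑ k : Fin n, (M.charpoly.coeff (k : ℕ)) • M ^ (k : ℕ) := by
      rw [Finset.sum_range fun i => algebraMap K _ (M.charpoly.coeff i) * M ^ i]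
      exact Finset.sum_congr rfl fun k _ => by rw [Algebra.smul_def]
    rw [h1] at h0
    exact eq_neg_of_add_eq_zero_left h0
  have hMP : M * P = P * cmpn n M.charpoly := by
    ext i j
    rw [Matrix.mul_apply, Matrix.mul_apply]
    have hlhs : ∑ k, M i k * P k j = ((M ^ ((j : ℕ) + 1)) *ᵥ v) i := by
      have h2 : (M *ᵥ ((M ^ (j : ℕ)) *ᵥ v)) i = ∑ k, M i k * ((M ^ (j : ℕ)) *ᵥ v) k := rfl
      rw [pow_succ', ← Matrix.mulVec_mulVec, h2]
      exact Finset.sum_congr rfl fun k _ => by rw [hPapp]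
    rw [hlhs]
    by_cases hj : (j : ℕ) = n - 1
    · -- last column
      have hn0 : 0 < n := by omega
      have hsplit : ∀ k : Fin n, P i k * cmpn n M.charpoly k j
          = -(M.charpoly.coeff (k : ℕ) * ((M ^ (k : ℕ)) *ᵥ v) i) := by
        intro k
        have hk : ¬ (k : ℕ) = (j : ℕ) + 1 := by omega
        have h1 : cmpn n M.charpoly k j = -M.charpoly.coeff (k : ℕ) := by
          show (if ((k : ℕ) = (j : ℕ) + 1) then (1:K) else 0) +
            (if (j : ℕ) = n - 1 then -M.charpoly.coeff (k : ℕ) else 0) = _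
          rw [if_neg hk, if_pos hj, zero_add]
        rw [hPapp, h1]
        ring
      rw [Finset.sum_congr rfl fun k _ => hsplit k]
      have hj1 : (j : ℕ) + 1 = n := by omega
      rw [hj1, hCH]
      simp only [Matrix.neg_mulVec, Pi.neg_apply, Finset.sum_neg_distrib]
      congr 1
      have : (∑ k : Fin n, (M.charpoly.coeff (k : ℕ)) • M ^ (k : ℕ)) *ᵥ v
          = ∑ k : Fin n, (M.charpoly.coeff (k : ℕ)) • ((M ^ (k : ℕ)) *ᵥ v) := by
        induction (Finset.univ : Finset (Fin n)) using Finset.induction with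
        | empty => simp [Matrix.zero_mulVec]
        | insert _ _ hx ih => simp [Finset.sum_insert hx, Matrix.add_mulVec, ih,
            Matrix.smul_mulVec]
      rw [this]
      simp [Finset.sum_apply]
    · -- j < n - 1
      have hjlt : (j : ℕ) + 1 < n := by omega
      set j1 : Fin n := ⟨(j : ℕ) + 1, hjlt⟩ with hj1
      rw [Finset.sum_eq_single j1]
      · have h1 : cmpn n M.charpoly j1 j = 1 := by
          show (if ((j1 : ℕ) = (j : ℕ) + 1) then (1:K) else 0) +
            (if (j : ℕ) = n - 1 then -M.charpoly.coeff (j1 : ℕ) else 0) = 1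
          rw [if_pos rfl, if_neg hj, add_zero]
        rw [hPapp, h1, mul_one]
      · intro k _ hk
        have h0 : cmpn n M.charpoly k j = 0 := by
          show (if ((k : ℕ) = (j : ℕ) + 1) then (1:K) else 0) +
            (if (j : ℕ) = n - 1 then -M.charpoly.coeff (k : ℕ) else 0) = 0
          rw [if_neg (fun h => hk (Fin.ext h)), if_neg hj, add_zero]
        rw [h0, mul_zero]
      · intro h
        exact absurd (Finset.mem_univ j1) h
  refine ⟨P, hdetP, ?_⟩
  rw [← hMP, Matrix.mul_nonsing_inv_cancel_right _ _ hdetP]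

lemma isTransvection_cmpn (hn : 2 ≤ n) (f g : K[X]) (hf : f.Monic) (hg : g.Monic)
    (hfd : f.natDegree = n) (hgd : g.natDegree = n) (hne : f ≠ g)
    (h00 : f.coeff 0 = g.coeff 0) (hf0 : f.coeff 0 ≠ 0)
    (hdet : IsUnit (cmpn n f : Matrix (Fin n) (Fin n) K).det) :
    IsTransvection ((cmpn n f : Matrix (Fin n) (Fin n) K)⁻¹ * cmpn n g) := by
  classical
  set C := (cmpn n f : Matrix (Fin n) (Fin n) K) with hC
  set C' := (cmpn n g : Matrix (Fin n) (Fin n) K) with hC'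
  set lst : Fin n := ⟨n - 1, by omega⟩ with hlst
  set d : Fin n → K := fun i => f.coeff i - g.coeff i with hd
  set s : Fin n → K := fun j => if (j : ℕ) = n - 1 then 1 else 0 with hs
  have hdiff : C' - C = vecMulVec d s := by
    ext i j
    show ((if (i:ℕ) = (j:ℕ)+1 then (1:K) else 0) + (if (j:ℕ) = n-1 then -g.coeff i else 0))
      - ((if (i:ℕ) = (j:ℕ)+1 then (1:K) else 0) + (if (j:ℕ) = n-1 then -f.coeff i else 0))
      = d i * (if (j:ℕ) = n-1 then 1 else 0)
    split_ifs <;> simp [hd] <;> ring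
  set u : Fin n → K := C⁻¹ *ᵥ d with hu
  have hT1 : C⁻¹ * C' - 1 = vecMulVec u s := by
    rw [← Matrix.nonsing_inv_mul C hdet, ← Matrix.mul_sub, hdiff]
    ext i j
    show ∑ k, C⁻¹ i k * (d k * s j) = (C⁻¹ *ᵥ d) i * s j
    show ∑ k, C⁻¹ i k * (d k * s j) = (∑ k, C⁻¹ i k * d k) * s j
    rw [Finset.sum_mul]
    exact Finset.sum_congr rfl fun k _ => by ring
  have hCu : C *ᵥ u = d := by
    rw [hu, Matrix.mulVec_mulVec, Matrix.mul_nonsing_inv C hdet, Matrix.one_mulVec]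
  have hulast : u lst = 0 := by
    have h0 := congrFun hCu (⟨0, by omega⟩ : Fin n)
    have hrow : (C *ᵥ u) (⟨0, by omega⟩ : Fin n) = -f.coeff 0 * u lst := by
      show ∑ k, C (⟨0, by omega⟩ : Fin n) k * u k = _
      rw [Finset.sum_eq_single lst]
      · have : C (⟨0, by omega⟩ : Fin n) lst = -f.coeff 0 := by
          show (if (0 : ℕ) = (lst:ℕ)+1 then (1:K) else 0) +
            (if (lst:ℕ) = n-1 then -f.coeff (⟨0, by omega⟩ : Fin n) else 0) = _
          rw [if_neg (by simp [hlst]), if_pos (by simp [hlst]), zero_add]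
        rw [this]
      · intro k _ hk
        have : C (⟨0, by omega⟩ : Fin n) k = 0 := by
          show (if (0 : ℕ) = (k:ℕ)+1 then (1:K) else 0) +
            (if (k:ℕ) = n-1 then -f.coeff (⟨0, by omega⟩ : Fin n) else 0) = 0
          rw [if_neg (by omega), if_neg ?_, add_zero]
          intro h
          exact hk (Fin.ext (by simp [hlst, h]))
        rw [this, zero_mul]
      · intro h
        exact absurd (Finset.mem_univ lst) h
    rw [hrow] at h0
    have hd0 : d (⟨0, by omega⟩ : Fin n) = 0 := by
      show f.coeff ((⟨0, by omega⟩ : Fin n) : ℕ) - g.coeff _ = 0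
      show f.coeff 0 - g.coeff 0 = 0
      rw [h00, sub_self]
    rw [hd0] at h0
    have := mul_eq_zero.mp h0
    rcases this with h | h
    · exact absurd (neg_eq_zero.mp h) hf0
    · exact h
  have hdne : d ≠ 0 := by
    intro h
    apply hne
    ext k
    rcases lt_trichotomy k n with hk | hk | hk
    · have := congrFun h (⟨k, hk⟩ : Fin n)
      simp only [hd, Pi.zero_apply] at this
      have h2 : f.coeff k - g.coeff k = 0 := this
      exact sub_eq_zero.mp h2
    · subst hk
      rw [← hfd] at hgd ⊢
      rw [hf.coeff_natDegree, ← hgd, hg.coeff_natDegree]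
    · rw [Polynomial.coeff_eq_zero_of_natDegree_lt (by omega),
        Polynomial.coeff_eq_zero_of_natDegree_lt (by omega)]
  have hune : u ≠ 0 := by
    intro h
    rw [h, Matrix.mulVec_zero] at hCu
    exact hdne hCu.symm
  obtain ⟨i0, hi0⟩ : ∃ i, u i ≠ 0 := by
    by_contra h
    push_neg at h
    exact hune (funext h)
  have hslst : s lst = 1 := by
    show (if ((lst : Fin n) : ℕ) = n-1 then (1:K) else 0) = 1
    rw [if_pos (by simp [hlst])]
  refine ⟨?_, ?_, ?_⟩
  · -- T ≠ 1
    intro h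
    have : vecMulVec u s = 0 := by rw [← hT1, h, sub_self]
    have h2 := congrFun (congrFun this i0) lst
    rw [Matrix.vecMulVec_apply, hslst, mul_one] at h2
    exact hi0 h2
  · -- square zero
    rw [hT1]
    ext i j
    show ∑ k, (u i * s k) * (u k * s j) = 0
    refine Finset.sum_eq_zero fun k _ => ?_
    by_cases hk : k = lst
    · rw [hk, hulast]; ring
    · have : s k = 0 := by
        show (if ((k : Fin n) : ℕ) = n-1 then (1:K) else 0) = 0
        rw [if_neg (fun h => hk (Fin.ext (by simp [hlst, h])))]
      rw [this]; ring
  · -- rank one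
    rw [hT1]
    have hle : (vecMulVec u s).rank ≤ 1 := by
      rw [Matrix.vecMulVec_eq (Fin 1)]
      refine le_trans (Matrix.rank_mul_le_left _ _) ?_
      have h := Matrix.rank_le_card_width (Matrix.replicateCol (Fin 1) u)
      simp only [Fintype.card_fin] at h
      exact h
    have hge : 1 ≤ (vecMulVec u s).rank := by
      by_contra h
      have h0 : (vecMulVec u s).rank = 0 := by omega
      have hrange : u ∈ LinearMap.range (vecMulVec u s).mulVecLin := by
        refine ⟨Pi.single lst 1, ?_⟩
        rw [Matrix.mulVecLin_apply]
        ext i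
        show ∑ k, (u i * s k) * (Pi.single lst (1:K) : Fin n → K) k = u i
        rw [Finset.sum_eq_single lst]
        · rw [hslst, Pi.single_eq_same]; ring
        · intro k _ hk
          rw [Pi.single_eq_of_ne hk]; ring
        · intro h
          exact absurd (Finset.mem_univ lst) h
      rw [Matrix.rank, Submodule.finrank_eq_zero] at h0
      rw [h0] at hrange
      exact hune (by simpa using hrange)
    omega

end ProdCyc

open ProdCyc in
theorem product_of_cyclic_classes_contains_transvection {K : Type*} [Field K] {n : ℕ}
    (hn : 2 ≤ n) (A B : Matrix (Fin n) (Fin n) K)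
    (hA : IsUnit A.det) (hB : IsUnit B.det)
    (hcA : IsCyclicMat A) (hcB : IsCyclicMat B)
    (hdet : A.det * B.det = 1)
    (hconj : ¬ ∃ Z : Matrix (Fin n) (Fin n) K, IsUnit Z.det ∧ B = Z * A⁻¹ * Z⁻¹) :
    ∃ X Y : Matrix (Fin n) (Fin n) K, IsUnit X.det ∧ IsUnit Y.det ∧
      IsTransvection ((X * A * X⁻¹) * (Y * B * Y⁻¹)) := by
  classical
  have hn0 : 0 < n := by omega
  -- conjugate A⁻¹ to a companion matrix
  have hdegA : (minpoly K A).natDegree = n := by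
    rw [← hcA, Matrix.charpoly_natDegree_eq_dim, Fintype.card_fin]
  obtain ⟨vA, hvA⟩ := exists_maxVec A
  have hspanA := spans_of_maxVec hn0 A hdegA vA hvA
  have hspanAinv := spans_inv A hA vA hspanA
  obtain ⟨P, hP, hPA⟩ := conj_cmpn A⁻¹ vA hspanAinv
  -- conjugate B to a companion matrix
  have hdegB : (minpoly K B).natDegree = n := by
    rw [← hcB, Matrix.charpoly_natDegree_eq_dim, Fintype.card_fin]
  obtain ⟨vB, hvB⟩ := exists_maxVec B
  have hspanB := spans_of_maxVec hn0 B hdegB vB hvB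
  obtain ⟨Q, hQ, hQB⟩ := conj_cmpn B vB hspanB
  set f := (A⁻¹).charpoly with hf
  set g := B.charpoly with hg
  -- determinants
  have hAd0 : A.det ≠ 0 := hA.ne_zero
  have hdetAinv : IsUnit (A⁻¹).det := Matrix.isUnit_nonsing_inv_det A hA
  have hdetBA : (A⁻¹).det = B.det := by
    rw [Matrix.det_nonsing_inv, Ring.inverse_eq_inv]
    exact inv_eq_of_mul_eq_one_right hdet
  have h1 : (A⁻¹).det = (-1 : K) ^ n * f.coeff 0 := by
    have := Matrix.det_eq_sign_charpoly_coeff A⁻¹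
    rwa [Fintype.card_fin] at this
  have h2 : B.det = (-1 : K) ^ n * g.coeff 0 := by
    have := Matrix.det_eq_sign_charpoly_coeff B
    rwa [Fintype.card_fin] at this
  have hsgn : ((-1 : K) ^ n) ≠ 0 := pow_ne_zero _ (neg_ne_zero.mpr one_ne_zero)
  have h00 : f.coeff 0 = g.coeff 0 := by
    have h3 : (-1 : K) ^ n * f.coeff 0 = (-1 : K) ^ n * g.coeff 0 := by
      rw [← h1, ← h2, hdetBA]
    exact mul_left_cancel₀ hsgn h3
  have hf0 : f.coeff 0 ≠ 0 := by
    intro h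
    rw [h1, h, mul_zero] at hdetAinv
    exact hdetAinv.ne_zero rfl
  -- companion of f as an explicit conjugate
  have hCf : P⁻¹ * A⁻¹ * P = cmpn n f := by
    rw [hPA]
    haveI : Invertible P := P.invertibleOfIsUnitDet hP
    simp [Matrix.mul_assoc, Matrix.inv_mul_cancel_left_of_invertible,
      Matrix.mul_inv_cancel_right_of_invertible, Matrix.inv_mul_of_invertible,
      Matrix.mul_inv_of_invertible]
  have hdetCf : IsUnit (cmpn n f : Matrix (Fin n) (Fin n) K).det := by
    rw [← hCf, Matrix.det_mul, Matrix.det_mul]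
    exact ((Matrix.isUnit_nonsing_inv_det P hP).mul hdetAinv).mul hP
  -- f ≠ g
  have hfg : f ≠ g := by
    intro h
    apply hconj
    refine ⟨Q * P⁻¹, ?_, ?_⟩
    · rw [Matrix.det_mul]
      exact hQ.mul (Matrix.isUnit_nonsing_inv_det P hP)
    · rw [Matrix.mul_inv_rev, Matrix.nonsing_inv_nonsing_inv P hP]
      rw [hQB, ← h, ← hCf]
      simp [Matrix.mul_assoc]
  -- the transvection
  have htrans := isTransvection_cmpn hn f g (A⁻¹).charpoly_monic B.charpoly_monic
    (by rw [hf, Matrix.charpoly_natDegree_eq_dim, Fintype.card_fin])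
    (by rw [hg, Matrix.charpoly_natDegree_eq_dim, Fintype.card_fin])
    hfg h00 hf0 hdetCf
  refine ⟨P⁻¹, Q⁻¹, Matrix.isUnit_nonsing_inv_det P hP, Matrix.isUnit_nonsing_inv_det Q hQ, ?_⟩
  have hX : P⁻¹ * A * (P⁻¹)⁻¹ = (cmpn n f : Matrix (Fin n) (Fin n) K)⁻¹ := by
    rw [Matrix.nonsing_inv_nonsing_inv P hP, ← hCf]
    rw [Matrix.mul_inv_rev, Matrix.mul_inv_rev, Matrix.nonsing_inv_nonsing_inv A hA,
      Matrix.nonsing_inv_nonsing_inv P hP]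
    simp [Matrix.mul_assoc]
  have hY : Q⁻¹ * B * (Q⁻¹)⁻¹ = cmpn n g := by
    rw [Matrix.nonsing_inv_nonsing_inv Q hQ, hQB]
    haveI : Invertible Q := Q.invertibleOfIsUnitDet hQ
    simp [Matrix.mul_assoc, Matrix.inv_mul_cancel_left_of_invertible,
      Matrix.mul_inv_cancel_right_of_invertible, Matrix.inv_mul_of_invertible,
      Matrix.mul_inv_of_invertible]
  rw [hX, hY]
  exact htrans
end
end

section
/- Let K be a field. Let A, B ∈ M(2, K) be nonscalar 2×2 matrices, and assume the characteristic polynomial of A is reducible over K (i.e., A has an eigenvalue in K). Define the trace set T = { trace((X A X⁻¹) · (Y B Y⁻¹)) : X, Y ∈ GL(2, K) }. Then T = K if and only if A is not primary or the characteristic polynomial of B is reducible over K. (Here, since the characteristic polynomial of A splits, 'A is not primary' means A has two distinct eigenvalues in K.) -/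
open Matrix Polynomial

noncomputable section

namespace TraceSetAux

variable {K : Type*} [Field K]

lemma charpoly_fin_two' (M : Matrix (Fin 2) (Fin 2) K) :
    M.charpoly = X ^ 2 - C M.trace * X + C M.det := by
  simp [Matrix.charpoly, Matrix.det_fin_two, charmatrix_apply_eq, charmatrix_apply_ne,
    Matrix.trace_fin_two]
  ring

lemma isRoot_charpoly_iff (M : Matrix (Fin 2) (Fin 2) K) (a : K) :
    M.charpoly.IsRoot a ↔ a * a - M.trace * a + M.det = 0 := by
  rw [charpoly_fin_two']
  simp only [IsRoot, eval_add, eval_sub, eval_pow, eval_mul, eval_C, eval_X]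
  constructor <;> intro h <;> linear_combination h

lemma not_irred_charpoly_iff (M : Matrix (Fin 2) (Fin 2) K) :
    ¬ Irreducible M.charpoly ↔ ∃ r : K, M.charpoly.IsRoot r := by
  have hm := M.charpoly_monic
  have hd : M.charpoly.natDegree = 2 := by simp
  rw [hm.not_irreducible_iff_exists_add_mul_eq_coeff hd]
  have h0 : M.charpoly.coeff 0 = M.det := by rw [charpoly_fin_two']; simp
  have h1 : M.charpoly.coeff 1 = -M.trace := by
    rw [charpoly_fin_two']
    simp [coeff_X, coeff_one]
  rw [h0, h1]
  constructor
  · rintro ⟨c₁, c₂, hp, hs⟩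
    refine ⟨-c₁, (isRoot_charpoly_iff M (-c₁)).mpr ?_⟩
    linear_combination hp - c₁ * hs
  · rintro ⟨r, hr⟩
    rw [isRoot_charpoly_iff] at hr
    refine ⟨-r, r - M.trace, ?_, by ring⟩
    linear_combination hr

lemma nonscalar_of_01 {M : Matrix (Fin 2) (Fin 2) K} (h : M 0 1 ≠ 0) :
    ∀ c : K, M ≠ c • (1 : Matrix (Fin 2) (Fin 2) K) := by
  intro c hc
  apply h
  rw [hc]
  simp

lemma nonscalar_of_10 {M : Matrix (Fin 2) (Fin 2) K} (h : M 1 0 ≠ 0) :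
    ∀ c : K, M ≠ c • (1 : Matrix (Fin 2) (Fin 2) K) := by
  intro c hc
  apply h
  rw [hc]
  simp

lemma mul_companion {M : Matrix (Fin 2) (Fin 2) K}
    (h : ∀ c : K, M ≠ c • (1 : Matrix (Fin 2) (Fin 2) K)) :
    ∃ P : Matrix (Fin 2) (Fin 2) K, IsUnit P.det ∧
      M * P = P * !![0, -M.det; 1, M.trace] := by
  by_cases h10 : M 1 0 ≠ 0
  · refine ⟨!![1, M 0 0; 0, M 1 0], ?_, ?_⟩
    · rw [Matrix.det_fin_two_of]
      simpa using isUnit_iff_ne_zero.mpr h10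
    · ext i j
      fin_cases i <;> fin_cases j <;>
        simp [Matrix.mul_apply, Fin.sum_univ_two, Matrix.det_fin_two,
          Matrix.trace_fin_two] <;> ring
  push_neg at h10
  by_cases h01 : M 0 1 ≠ 0
  · refine ⟨!![0, M 0 1; 1, M 1 1], ?_, ?_⟩
    · rw [Matrix.det_fin_two_of]
      simpa using isUnit_iff_ne_zero.mpr h01
    · ext i j
      fin_cases i <;> fin_cases j <;>
        simp [Matrix.mul_apply, Fin.sum_univ_two, Matrix.det_fin_two,
          Matrix.trace_fin_two] <;> ring
  push_neg at h01
  have hne : M 0 0 ≠ M 1 1 := by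
    intro he
    apply h (M 0 0)
    ext i j
    fin_cases i <;> fin_cases j <;>
      simp [Matrix.one_apply, h10, h01, he]
  refine ⟨!![1, M 0 0; 1, M 1 1], ?_, ?_⟩
  · rw [Matrix.det_fin_two_of]
    simpa using isUnit_iff_ne_zero.mpr (sub_ne_zero_of_ne (Ne.symm hne))
  · ext i j
    fin_cases i <;> fin_cases j <;>
      simp [Matrix.mul_apply, Fin.sum_univ_two, Matrix.det_fin_two,
        Matrix.trace_fin_two, h10, h01] <;> ring

lemma conj_of_eq {M N : Matrix (Fin 2) (Fin 2) K}
    (hM : ∀ c : K, M ≠ c • (1 : Matrix (Fin 2) (Fin 2) K))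
    (hN : ∀ c : K, N ≠ c • (1 : Matrix (Fin 2) (Fin 2) K))
    (ht : M.trace = N.trace) (hd : M.det = N.det) :
    ∃ Z : Matrix (Fin 2) (Fin 2) K, IsUnit Z.det ∧ Z * N * Z⁻¹ = M := by
  obtain ⟨P, hP, hPe⟩ := mul_companion hM
  obtain ⟨Q, hQ, hQe⟩ := mul_companion hN
  rw [← ht, ← hd] at hQe
  refine ⟨P * Q⁻¹, ?_, ?_⟩
  · rw [Matrix.det_mul]
    exact hP.mul (Matrix.isUnit_nonsing_inv_det Q hQ)
  · rw [Matrix.mul_inv_rev, Matrix.nonsing_inv_nonsing_inv Q hQ]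
    have h1 : Q⁻¹ * (N * Q) = !![0, -M.det; 1, M.trace] := by
      rw [hQe, ← Matrix.mul_assoc, Matrix.nonsing_inv_mul Q hQ, Matrix.one_mul]
    calc P * Q⁻¹ * N * (Q * P⁻¹)
        = P * (Q⁻¹ * (N * Q)) * P⁻¹ := by simp only [Matrix.mul_assoc]
      _ = P * !![0, -M.det; 1, M.trace] * P⁻¹ := by rw [h1]
      _ = M * P * P⁻¹ := by rw [hPe]
      _ = M := by rw [Matrix.mul_assoc, Matrix.mul_nonsing_inv P hP, Matrix.mul_one]

lemma trace_conj {Z B : Matrix (Fin 2) (Fin 2) K} (hZ : IsUnit Z.det) :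
    (Z * B * Z⁻¹).trace = B.trace := by
  rw [Matrix.trace_mul_comm, ← Matrix.mul_assoc, Matrix.nonsing_inv_mul Z hZ, Matrix.one_mul]

lemma det_conj' {Z B : Matrix (Fin 2) (Fin 2) K} (hZ : IsUnit Z.det) :
    (Z * B * Z⁻¹).det = B.det := by
  rw [Matrix.det_mul, Matrix.det_mul, Matrix.det_nonsing_inv, Ring.inverse_eq_inv']
  rcases hZ with ⟨u, hu⟩
  field_simp [← hu]

lemma trace_key {N B X Y : Matrix (Fin 2) (Fin 2) K} (hX : IsUnit X.det) :
    Matrix.trace ((X * N * X⁻¹) * (Y * B * Y⁻¹))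
      = Matrix.trace (N * ((X⁻¹ * Y) * B * (X⁻¹ * Y)⁻¹)) := by
  rw [Matrix.mul_inv_rev, Matrix.nonsing_inv_nonsing_inv X hX]
  rw [show (X * N * X⁻¹) * (Y * B * Y⁻¹) = X * (N * (X⁻¹ * Y * B * Y⁻¹)) by
        simp only [Matrix.mul_assoc]]
  rw [Matrix.trace_mul_comm]
  simp only [Matrix.mul_assoc]

lemma trace_J_mul (l : K) (M : Matrix (Fin 2) (Fin 2) K) :
    Matrix.trace (!![l, 1; 0, l] * M) = l * M.trace + M 1 0 := by
  simp [Matrix.trace_fin_two, Matrix.mul_apply, Fin.sum_univ_two, Matrix.vecMul,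
    dotProduct]
  ring

lemma trace_D_mul (a b : K) (M : Matrix (Fin 2) (Fin 2) K) :
    Matrix.trace (!![a, 0; 0, b] * M) = a * M 0 0 + b * M 1 1 := by
  simp [Matrix.trace_fin_two, Matrix.mul_apply, Fin.sum_univ_two, Matrix.vecMul,
    dotProduct]

end TraceSetAux

open TraceSetAux

theorem trace_set_eq_univ_iff {K : Type*} [Field K]
    (A B : Matrix (Fin 2) (Fin 2) K)
    (hAns : ∀ c : K, A ≠ c • (1 : Matrix (Fin 2) (Fin 2) K))
    (hBns : ∀ c : K, B ≠ c • (1 : Matrix (Fin 2) (Fin 2) K))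
    (hAred : ¬ Irreducible A.charpoly) :
    {t : K | ∃ X Y : Matrix (Fin 2) (Fin 2) K, IsUnit X.det ∧ IsUnit Y.det ∧
        t = Matrix.trace ((X * A * X⁻¹) * (Y * B * Y⁻¹))}
      = Set.univ
    ↔ ((∃ a b : K, a ≠ b ∧ A.charpoly.IsRoot a ∧ A.charpoly.IsRoot b)
        ∨ ¬ Irreducible B.charpoly) := by
  constructor
  · intro hT
    by_cases hdist : ∃ a b : K, a ≠ b ∧ A.charpoly.IsRoot a ∧ A.charpoly.IsRoot b
    · exact Or.inl hdist
    right
    have huniq : ∀ a b : K, A.charpoly.IsRoot a → A.charpoly.IsRoot b → a = b := by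
      intro a b ha hb
      by_contra hne
      exact hdist ⟨a, b, hne, ha, hb⟩
    obtain ⟨l, hl⟩ := (not_irred_charpoly_iff A).mp hAred
    have hl' := (isRoot_charpoly_iff A l).mp hl
    have htA : A.trace = l + l := by
      have h2 : A.charpoly.IsRoot (A.trace - l) := by
        rw [isRoot_charpoly_iff]
        linear_combination hl'
      have h3 := huniq _ _ h2 hl
      linear_combination h3
    have hdA : A.det = l * l := by linear_combination hl' + l * htA
    intro hBirr
    have hJns : ∀ c : K, !![l, (1:K); 0, l] ≠ c • (1 : Matrix (Fin 2) (Fin 2) K) :=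
      nonscalar_of_01 (by norm_num)
    obtain ⟨P, hP, hPA⟩ := conj_of_eq hAns hJns
      (by rw [Matrix.trace_fin_two_of]; exact htA)
      (by rw [Matrix.det_fin_two_of]; linear_combination hdA)
    have hmem : l * B.trace ∈ {t : K | ∃ X Y : Matrix (Fin 2) (Fin 2) K,
        IsUnit X.det ∧ IsUnit Y.det ∧
        t = Matrix.trace ((X * A * X⁻¹) * (Y * B * Y⁻¹))} := by
      rw [hT]; trivial
    obtain ⟨X, Y, hX, hY, hEq⟩ := hmem
    rw [← hPA] at hEq
    have hrw : X * (P * !![l, (1:K); 0, l] * P⁻¹) * X⁻¹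
        = (X * P) * !![l, (1:K); 0, l] * (X * P)⁻¹ := by
      rw [Matrix.mul_inv_rev]
      simp only [Matrix.mul_assoc]
    have hXP : IsUnit (X * P).det := by
      rw [Matrix.det_mul]; exact hX.mul hP
    rw [hrw, trace_key hXP, trace_J_mul] at hEq
    have hZ : IsUnit ((X * P)⁻¹ * Y).det := by
      rw [Matrix.det_mul]
      exact (Matrix.isUnit_nonsing_inv_det _ hXP).mul hY
    set M := ((X * P)⁻¹ * Y) * B * ((X * P)⁻¹ * Y)⁻¹ with hMdef
    have htM : M.trace = B.trace := trace_conj hZ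
    have hdM : M.det = B.det := det_conj' hZ
    rw [htM] at hEq
    have h10 : M 1 0 = 0 := by linear_combination -hEq
    have ht' : B.trace = M 0 0 + M 1 1 := by rw [← htM, Matrix.trace_fin_two]
    have hd' : B.det = M 0 0 * M 1 1 - M 0 1 * M 1 0 := by rw [← hdM, Matrix.det_fin_two]
    have hroot : B.charpoly.IsRoot (M 0 0) := by
      rw [isRoot_charpoly_iff]
      linear_combination (-(M 0 0)) * ht' + hd' - M 0 1 * h10
    exact (not_irred_charpoly_iff B).mpr ⟨M 0 0, hroot⟩ hBirr
  · intro hor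
    rw [Set.eq_univ_iff_forall]
    intro c
    by_cases hdist : ∃ a b : K, a ≠ b ∧ A.charpoly.IsRoot a ∧ A.charpoly.IsRoot b
    · obtain ⟨a, b, hab, ha, hb⟩ := hdist
      have ha' := (isRoot_charpoly_iff A a).mp ha
      have hb' := (isRoot_charpoly_iff A b).mp hb
      have hab' : a - b ≠ 0 := sub_ne_zero_of_ne hab
      have htA : A.trace = a + b := by
        have h0 : (a - b) * (A.trace - (a + b)) = 0 := by linear_combination hb' - ha'
        rcases mul_eq_zero.mp h0 with h' | h'
        · exact absurd h' hab'
        · linear_combination h'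
      have hdA : A.det = a * b := by linear_combination ha' + a * htA
      have hDns : ∀ e : K, !![a, (0:K); 0, b] ≠ e • (1 : Matrix (Fin 2) (Fin 2) K) := by
        intro e he
        apply hab
        have h00 : a = e := by
          have := congrFun (congrFun he 0) 0
          simpa using this
        have h11 : b = e := by
          have := congrFun (congrFun he 1) 1
          simpa using this
        rw [h00, h11]
      obtain ⟨P, hP, hPA⟩ := conj_of_eq hAns hDns
        (by rw [Matrix.trace_fin_two_of]; exact htA)
        (by rw [Matrix.det_fin_two_of]; linear_combination hdA)
      set s : K := (c - b * B.trace) / (a - b) with hs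
      set M : Matrix (Fin 2) (Fin 2) K :=
        !![s, 1; s * (B.trace - s) - B.det, B.trace - s] with hM
      have hMns : ∀ e : K, M ≠ e • (1 : Matrix (Fin 2) (Fin 2) K) :=
        nonscalar_of_01 (by rw [hM]; norm_num)
      obtain ⟨Y, hY, hYB⟩ := conj_of_eq hMns hBns
        (by rw [hM, Matrix.trace_fin_two_of]; ring)
        (by rw [hM, Matrix.det_fin_two_of]; ring)
      refine ⟨P⁻¹, Y, Matrix.isUnit_nonsing_inv_det P hP, hY, ?_⟩
      rw [Matrix.nonsing_inv_nonsing_inv P hP, hYB]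
      have hPAP : P⁻¹ * A * P = !![a, 0; 0, b] := by
        rw [← hPA]
        simp only [← Matrix.mul_assoc]
        rw [Matrix.nonsing_inv_mul P hP, Matrix.one_mul, Matrix.mul_assoc,
          Matrix.nonsing_inv_mul P hP, Matrix.mul_one]
      rw [hPAP, trace_D_mul]
      have hM00 : M 0 0 = s := by rw [hM]; norm_num
      have hM11 : M 1 1 = B.trace - s := by rw [hM]; norm_num
      rw [hM00, hM11, hs]
      field_simp
      ring
    · have hBred : ¬ Irreducible B.charpoly := hor.resolve_left hdist
      obtain ⟨r, hr⟩ := (not_irred_charpoly_iff B).mp hBred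
      have hr' := (isRoot_charpoly_iff B r).mp hr
      have huniq : ∀ a b : K, A.charpoly.IsRoot a → A.charpoly.IsRoot b → a = b := by
        intro a b ha hb
        by_contra hne
        exact hdist ⟨a, b, hne, ha, hb⟩
      obtain ⟨l, hl⟩ := (not_irred_charpoly_iff A).mp hAred
      have hl' := (isRoot_charpoly_iff A l).mp hl
      have htA : A.trace = l + l := by
        have h2 : A.charpoly.IsRoot (A.trace - l) := by
          rw [isRoot_charpoly_iff]
          linear_combination hl'
        have h3 := huniq _ _ h2 hl
        linear_combination h3
      have hdA : A.det = l * l := by linear_combination hl' + l * htA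
      have hJns : ∀ e : K, !![l, (1:K); 0, l] ≠ e • (1 : Matrix (Fin 2) (Fin 2) K) :=
        nonscalar_of_01 (by norm_num)
      obtain ⟨P, hP, hPA⟩ := conj_of_eq hAns hJns
        (by rw [Matrix.trace_fin_two_of]; exact htA)
        (by rw [Matrix.det_fin_two_of]; linear_combination hdA)
      have hPAP : P⁻¹ * A * P = !![l, (1:K); 0, l] := by
        rw [← hPA]
        simp only [← Matrix.mul_assoc]
        rw [Matrix.nonsing_inv_mul P hP, Matrix.one_mul, Matrix.mul_assoc,
          Matrix.nonsing_inv_mul P hP, Matrix.mul_one]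
      by_cases hv : c - l * B.trace = 0
      · set M : Matrix (Fin 2) (Fin 2) K := !![r, 1; 0, B.trace - r] with hM
        have hMns : ∀ e : K, M ≠ e • (1 : Matrix (Fin 2) (Fin 2) K) :=
          nonscalar_of_01 (by rw [hM]; norm_num)
        obtain ⟨Y, hY, hYB⟩ := conj_of_eq hMns hBns
          (by rw [hM, Matrix.trace_fin_two_of]; ring)
          (by rw [hM, Matrix.det_fin_two_of]; linear_combination -hr')
        refine ⟨P⁻¹, Y, Matrix.isUnit_nonsing_inv_det P hP, hY, ?_⟩
        rw [Matrix.nonsing_inv_nonsing_inv P hP, hYB, hPAP, trace_J_mul]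
        have h1 : M.trace = B.trace := by rw [hM, Matrix.trace_fin_two_of]; ring
        have h2 : M 1 0 = 0 := by rw [hM]; norm_num
        rw [h1, h2]
        linear_combination hv
      · set M : Matrix (Fin 2) (Fin 2) K :=
          !![0, -B.det / (c - l * B.trace); c - l * B.trace, B.trace] with hM
        have hMns : ∀ e : K, M ≠ e • (1 : Matrix (Fin 2) (Fin 2) K) :=
          nonscalar_of_10 (by rw [hM]; norm_num; exact hv)
        obtain ⟨Y, hY, hYB⟩ := conj_of_eq hMns hBns
          (by rw [hM, Matrix.trace_fin_two_of]; ring)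
          (by rw [hM, Matrix.det_fin_two_of, zero_mul, zero_sub, div_mul_cancel₀ _ hv, neg_neg])
        refine ⟨P⁻¹, Y, Matrix.isUnit_nonsing_inv_det P hP, hY, ?_⟩
        rw [Matrix.nonsing_inv_nonsing_inv P hP, hYB, hPAP, trace_J_mul]
        have h1 : M.trace = B.trace := by rw [hM, Matrix.trace_fin_two_of]; ring
        have h2 : M 1 0 = c - l * B.trace := by rw [hM]; norm_num
        rw [h1, h2]
        ring
end
end

section
/- Let K be a field and V a finite-dimensional K-vector space with a nondegenerate alternating bilinear form f. Let φ be a symplectic transformation of (V, f) that is cyclic, i.e., V = span{u·φⁱ : i ≥ 0} for some vector u ∈ V. Let ρ be a linear involution of V (ρ² = id) with ρ⁻¹φρ = φ⁻¹. Then ρ is skew-symplectic: f(xρ, yρ) = −f(x, y) for all x, y ∈ V. -/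
open Module

noncomputable section

theorem involution_inverting_cyclic_symplectic_is_skew {K V : Type*} [Field K]
    [AddCommGroup V] [Module K V] [FiniteDimensional K V]
    (f : LinearMap.BilinForm K V) (hnd : f.Nondegenerate)
    (halt : ∀ v : V, f v v = 0)
    (φ : V ≃ₗ[K] V) (hφ : ∀ x y : V, f (φ x) (φ y) = f x y)
    (hcyc : ∃ u : V, Submodule.span K (Set.range fun i : ℕ => (φ ^ i) u) = ⊤)
    (ρ : V →ₗ[K] V) (hρ2 : ∀ x : V, ρ (ρ x) = x)
    (hinv : ∀ x : V, ρ (φ (ρ x)) = φ.symm x) :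
    ∀ x y : V, f (ρ x) (ρ y) = - f x y := by
  -- f is skew-symmetric
  have hskew : ∀ x y : V, f x y = - f y x := by
    intro x y
    have h := halt (x + y)
    simp only [map_add, LinearMap.add_apply] at h
    rw [halt x, halt y] at h
    linear_combination h
  -- ρ anti-commutes with φ
  have hρφ : ∀ x : V, ρ (φ x) = φ.symm (ρ x) := by
    intro x
    have := hinv (ρ x)
    rwa [hρ2 x] at this
  -- ρ conjugates powers of φ to powers of φ.symm
  have hρφn : ∀ (i : ℕ) (x : V), ρ ((φ ^ i) x) = (φ.symm ^ i) (ρ x) := by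
    intro i
    induction i with
    | zero => intro x; simp
    | succ n ih =>
      intro x
      have h1 : (φ ^ (n + 1)) x = (φ ^ n) (φ x) := by
        rw [pow_succ]; rfl
      have h2 : (φ.symm ^ (n + 1)) (ρ x) = (φ.symm ^ n) (φ.symm (ρ x)) := by
        rw [pow_succ]; rfl
      rw [h1, ih (φ x), hρφ x, h2]
  -- move powers of φ.symm across f
  have hmove : ∀ (i : ℕ) (x y : V), f ((φ.symm ^ i) x) y = f x ((φ ^ i) y) := by
    intro i
    induction i with
    | zero => intro x y; simp
    | succ n ih =>
      intro x y
      have h1 : (φ.symm ^ (n + 1)) x = (φ.symm ^ n) (φ.symm x) := by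
        rw [pow_succ]; rfl
      have h2 : (φ ^ (n + 1)) y = (φ ^ n) (φ y) := by
        rw [pow_succ]; rfl
      rw [h1, ih (φ.symm x) y, h2]
      have : f (φ.symm x) ((φ ^ n) y) = f (φ (φ.symm x)) (φ ((φ ^ n) y)) := (hφ _ _).symm
      rw [this, φ.apply_symm_apply]
      congr 1
      have : φ ((φ ^ n) y) = (φ ^ (n + 1)) y := by rw [pow_succ']; rfl
      rw [this, h2]
  obtain ⟨u, hu⟩ := hcyc
  -- the form h(x,y) = f(ρx, y) is symmetric
  have hsymm : ∀ x y : V, f (ρ x) y = f (ρ y) x := by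
    have key : (LinearMap.comp f ρ) = (LinearMap.comp f ρ).flip := by
      apply LinearMap.ext_on hu
      rintro x ⟨i, rfl⟩
      apply LinearMap.ext_on hu
      rintro y ⟨j, rfl⟩
      have lhs : f (ρ ((φ ^ i) u)) ((φ ^ j) u) = f (ρ u) ((φ ^ (i + j)) u) := by
        rw [hρφn i u, hmove i (ρ u) ((φ ^ j) u)]
        congr 1
        rw [pow_add]; rfl
      have rhs : f (ρ ((φ ^ j) u)) ((φ ^ i) u) = f (ρ u) ((φ ^ (j + i)) u) := by
        rw [hρφn j u, hmove j (ρ u) ((φ ^ i) u)]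
        congr 1
        rw [pow_add]; rfl
      simp only [LinearMap.coe_comp, Function.comp_apply, LinearMap.flip_apply]
      rw [lhs, rhs, add_comm]
    intro x y
    have h2 := LinearMap.congr_fun (LinearMap.congr_fun key x) y
    simpa using h2
  intro x y
  rw [hsymm x (ρ y), hρ2 y]
  exact hskew y x
end
end

section
/- Let K be a field and V a finite-dimensional K-vector space with a nondegenerate alternating bilinear form f. Let σ, τ be symplectic involutions of (V, f) (σ² = τ² = id, preserving f) that are alternate, i.e., f(vσ, v) = 0 for all v ∈ V, and set φ = σ∘τ. If U is a φ-cyclic subspace of V (U = span{u·φⁱ : i ≥ 0} for some u ∈ V), then σ(U) ⊆ U^⊥ and τ(U) ⊆ U^⊥; that is, f(x, σ(y)) = 0 and f(x, τ(y)) = 0 for all x, y ∈ U. -/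
open Module

noncomputable section

theorem cyclic_subspace_perp_of_alternate_involutions {K V : Type*} [Field K]
    [AddCommGroup V] [Module K V] [FiniteDimensional K V]
    (f : LinearMap.BilinForm K V) (hnd : f.Nondegenerate)
    (halt : ∀ v : V, f v v = 0)
    (σ τ : Module.End K V)
    (hσ2 : σ * σ = 1) (hτ2 : τ * τ = 1)
    (hσf : ∀ x y : V, f (σ x) (σ y) = f x y)
    (hτf : ∀ x y : V, f (τ x) (τ y) = f x y)
    (hσalt : ∀ v : V, f (σ v) v = 0)
    (hτalt : ∀ v : V, f (τ v) v = 0)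
    (U : Submodule K V) (u : V)
    (hU : U = Submodule.span K (Set.range fun i : ℕ => ((σ * τ) ^ i) u)) :
    ∀ x ∈ U, ∀ y ∈ U, f x (σ y) = 0 ∧ f x (τ y) = 0 := by
  set φ := σ * τ with hφ
  set ψ := τ * σ with hψ
  -- skew symmetry
  have hskew : ∀ x y : V, f x y = - f y x := by
    intro x y
    have h := halt (x + y)
    simp only [map_add, LinearMap.add_apply, halt] at h
    linear_combination h
  -- σ-symmetry of f
  have hσsym : ∀ x y : V, f (σ x) y = f x (σ y) := by
    intro x y
    have h := hσalt (x + y)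
    simp only [map_add, LinearMap.add_apply, hσalt] at h
    rw [hskew x (σ y)]
    linear_combination h
  have hτsym : ∀ x y : V, f (τ x) y = f x (τ y) := by
    intro x y
    have h := hτalt (x + y)
    simp only [map_add, LinearMap.add_apply, hτalt] at h
    rw [hskew x (τ y)]
    linear_combination h
  -- algebraic identities
  have hφψ : φ * ψ = 1 := by
    rw [hφ, hψ, mul_assoc, ← mul_assoc τ, hτ2, one_mul, hσ2]
  have hψφ : ψ * φ = 1 := by
    rw [hφ, hψ, mul_assoc, ← mul_assoc σ, hσ2, one_mul, hτ2]
  have hpowφψ : ∀ k : ℕ, φ ^ k * ψ ^ k = 1 := by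
    intro k
    induction k with
    | zero => simp
    | succ n ih =>
      rw [pow_succ' φ, pow_succ ψ, mul_assoc, ← mul_assoc (φ ^ n), ih, one_mul, hφψ]
  have hpowψφ : ∀ k : ℕ, ψ ^ k * φ ^ k = 1 := by
    intro k
    induction k with
    | zero => simp
    | succ n ih =>
      rw [pow_succ' ψ, pow_succ φ, mul_assoc, ← mul_assoc (ψ ^ n), ih, one_mul, hψφ]
  have hσφ : σ * φ = ψ * σ := by
    rw [hφ, hψ, ← mul_assoc, hσ2, mul_assoc, hσ2, mul_one, one_mul]
  have hτφ : τ * φ = ψ * τ := by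
    rw [hφ, hψ, ← mul_assoc, mul_assoc]
  have hσpow : ∀ k : ℕ, σ * φ ^ k = ψ ^ k * σ := by
    intro k
    induction k with
    | zero => simp
    | succ n ih =>
      rw [pow_succ φ, pow_succ ψ, ← mul_assoc σ, ih, mul_assoc, hσφ]
      simp only [mul_assoc]
  have hτpow : ∀ k : ℕ, τ * φ ^ k = ψ ^ k * τ := by
    intro k
    induction k with
    | zero => simp
    | succ n ih =>
      rw [pow_succ φ, pow_succ ψ, ← mul_assoc τ, ih, mul_assoc, hτφ]
      simp only [mul_assoc]
  -- invariance of f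
  have hφf : ∀ x y : V, f (φ x) (φ y) = f x y := by
    intro x y
    simp only [hφ, Module.End.mul_apply, hσf, hτf]
  have hψf : ∀ x y : V, f (ψ x) (ψ y) = f x y := by
    intro x y
    simp only [hψ, Module.End.mul_apply, hσf, hτf]
  have hφpf : ∀ (k : ℕ) (x y : V), f ((φ ^ k) x) ((φ ^ k) y) = f x y := by
    intro k
    induction k with
    | zero => simp
    | succ n ih =>
      intro x y
      rw [pow_succ' φ]
      simp only [Module.End.mul_apply]
      rw [hφf, ih]
  have hψpf : ∀ (k : ℕ) (x y : V), f ((ψ ^ k) x) ((ψ ^ k) y) = f x y := by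
    intro k
    induction k with
    | zero => simp
    | succ n ih =>
      intro x y
      rw [pow_succ' ψ]
      simp only [Module.End.mul_apply]
      rw [hψf, ih]
  -- shift lemmas
  have hψshift : ∀ (k : ℕ) (x y : V), f ((ψ ^ k) x) y = f x ((φ ^ k) y) := by
    intro k x y
    calc f ((ψ ^ k) x) y = f ((φ ^ k) ((ψ ^ k) x)) ((φ ^ k) y) := (hφpf k _ _).symm
      _ = f x ((φ ^ k) y) := by
          congr 1
          rw [← Module.End.mul_apply, hpowφψ k, Module.End.one_apply]
  have hφshift : ∀ (k : ℕ) (x y : V), f ((φ ^ k) x) y = f x ((ψ ^ k) y) := by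
    intro k x y
    calc f ((φ ^ k) x) y = f ((ψ ^ k) ((φ ^ k) x)) ((ψ ^ k) y) := (hψpf k _ _).symm
      _ = f x ((ψ ^ k) y) := by
          congr 1
          rw [← Module.End.mul_apply, hpowψφ k, Module.End.one_apply]
  -- even cases
  have Aeven : ∀ m : ℕ, f (σ u) ((φ ^ (m + m)) u) = 0 := by
    intro m
    have h1 : (φ ^ (m + m)) u = (φ ^ m) ((φ ^ m) u) := by
      rw [← Module.End.mul_apply, ← pow_add]
    rw [h1, ← hψshift m]
    have h2 : (ψ ^ m) (σ u) = σ ((φ ^ m) u) := by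
      rw [← Module.End.mul_apply, ← Module.End.mul_apply, ← hσpow m]
    rw [h2]
    exact hσalt _
  have Beven : ∀ m : ℕ, f (τ u) ((φ ^ (m + m)) u) = 0 := by
    intro m
    have h1 : (φ ^ (m + m)) u = (φ ^ m) ((φ ^ m) u) := by
      rw [← Module.End.mul_apply, ← pow_add]
    rw [h1, ← hψshift m]
    have h2 : (ψ ^ m) (τ u) = τ ((φ ^ m) u) := by
      rw [← Module.End.mul_apply, ← Module.End.mul_apply, ← hτpow m]
    rw [h2]
    exact hτalt _
  -- relation a_{k+1} = b_k
  have hab : ∀ k : ℕ, f (σ u) ((φ ^ (k + 1)) u) = f (τ u) ((φ ^ k) u) := by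
    intro k
    have h1 : (φ ^ (k + 1)) u = σ (τ ((φ ^ k) u)) := by
      rw [pow_succ' φ]
      simp only [Module.End.mul_apply, hφ]
    rw [h1, hσf, ← hτsym]
  -- key lemma
  have keyA : ∀ k : ℕ, f (σ u) ((φ ^ k) u) = 0 := by
    intro k
    rcases Nat.even_or_odd k with ⟨m, hm⟩ | ⟨m, hm⟩
    · rw [hm]; exact Aeven m
    · have : k = (m + m) + 1 := by omega
      rw [this, hab]; exact Beven m
  have keyB : ∀ k : ℕ, f (τ u) ((φ ^ k) u) = 0 := by
    intro k
    rcases Nat.even_or_odd k with ⟨m, hm⟩ | ⟨m, hm⟩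
    · rw [hm]; exact Beven m
    · have h1 : k + 1 = (m + 1) + (m + 1) := by omega
      have := hab k
      rw [h1] at this
      rw [← this]
      exact Aeven (m + 1)
  -- generators
  have gen : ∀ i j : ℕ, f ((φ ^ i) u) (σ ((φ ^ j) u)) = 0 ∧
      f ((φ ^ i) u) (τ ((φ ^ j) u)) = 0 := by
    intro i j
    have hσj : σ ((φ ^ j) u) = (ψ ^ j) (σ u) := by
      rw [← Module.End.mul_apply, ← Module.End.mul_apply, hσpow j]
    have hτj : τ ((φ ^ j) u) = (ψ ^ j) (τ u) := by
      rw [← Module.End.mul_apply, ← Module.End.mul_apply, hτpow j]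
    have hcomb : ∀ w : V, f ((φ ^ i) u) ((ψ ^ j) w) = f ((φ ^ (j + i)) u) w := by
      intro w
      rw [← hφshift j, ← Module.End.mul_apply, ← pow_add]
    constructor
    · rw [hσj, hcomb, hskew, keyA]; ring
    · rw [hτj, hcomb, hskew, keyB]; ring
  -- span argument
  intro x hx y hy
  rw [hU] at hx hy
  have hxσ : ∀ j : ℕ, f x (σ ((φ ^ j) u)) = 0 := by
    intro j
    have hle : Submodule.span K (Set.range fun i : ℕ => ((σ * τ) ^ i) u) ≤
        LinearMap.ker (f.flip (σ ((φ ^ j) u))) := by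
      rw [Submodule.span_le]
      rintro _ ⟨i, rfl⟩
      simp only [SetLike.mem_coe, LinearMap.mem_ker, LinearMap.flip_apply]
      exact (gen i j).1
    exact hle hx
  have hxτ : ∀ j : ℕ, f x (τ ((φ ^ j) u)) = 0 := by
    intro j
    have hle : Submodule.span K (Set.range fun i : ℕ => ((σ * τ) ^ i) u) ≤
        LinearMap.ker (f.flip (τ ((φ ^ j) u))) := by
      rw [Submodule.span_le]
      rintro _ ⟨i, rfl⟩
      simp only [SetLike.mem_coe, LinearMap.mem_ker, LinearMap.flip_apply]
      exact (gen i j).2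
    exact hle hx
  constructor
  · have hle : Submodule.span K (Set.range fun i : ℕ => ((σ * τ) ^ i) u) ≤
        LinearMap.ker ((f x).comp (σ : V →ₗ[K] V)) := by
      rw [Submodule.span_le]
      rintro _ ⟨j, rfl⟩
      simp only [SetLike.mem_coe, LinearMap.mem_ker, LinearMap.comp_apply]
      exact hxσ j
    exact hle hy
  · have hle : Submodule.span K (Set.range fun i : ℕ => ((σ * τ) ^ i) u) ≤
        LinearMap.ker ((f x).comp (τ : V →ₗ[K] V)) := by
      rw [Submodule.span_le]
      rintro _ ⟨j, rfl⟩
      simp only [SetLike.mem_coe, LinearMap.mem_ker, LinearMap.comp_apply]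
      exact hxτ j
    exact hle hy
end
end

section
/- Let K be a field of characteristic 2 and W a K-vector space of dimension 2m+1 with m ≥ 1. Let φ ∈ GL(W) be cyclic with characteristic polynomial (x + 1)^{2m+1} (so its minimal polynomial is also (x + 1)^{2m+1}). Suppose φ = σ∘τ where σ, τ ∈ GL(W) are involutions (σ² = τ² = id). Then: (1) dim ker(σ − id) = m + 1 = dim ker(τ − id) and rank(σ − id) = m = rank(τ − id); (2) range(φ − id) = range(σ − id) + range(τ − id) with range(σ − id) ∩ range(τ − id) = 0, and ker(φ − id) = ker(σ − id) ∩ ker(τ − id). -/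
open Module Polynomial

noncomputable section

theorem involution_factors_of_cyclic_unipotent_char_two {K W : Type*} [Field K]
    [CharP K 2] [AddCommGroup W] [Module K W] [FiniteDimensional K W]
    {m : ℕ} (hm : 1 ≤ m) (hdim : Module.finrank K W = 2 * m + 1)
    (φ σ τ : Module.End K W)
    (hφ : φ = σ * τ) (hσ2 : σ * σ = 1) (hτ2 : τ * τ = 1)
    (hchar : LinearMap.charpoly φ = (X + 1) ^ (2 * m + 1))
    (hcyc : minpoly K φ = LinearMap.charpoly φ) :
    (Module.finrank K (LinearMap.ker (σ - 1)) = m + 1 ∧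
       Module.finrank K (LinearMap.ker (τ - 1)) = m + 1 ∧
       Module.finrank K (LinearMap.range (σ - 1)) = m ∧
       Module.finrank K (LinearMap.range (τ - 1)) = m) ∧
    (LinearMap.range (φ - 1) = LinearMap.range (σ - 1) ⊔ LinearMap.range (τ - 1) ∧
       LinearMap.range (σ - 1) ⊓ LinearMap.range (τ - 1) = ⊥ ∧
       LinearMap.ker (φ - 1) = LinearMap.ker (σ - 1) ⊓ LinearMap.ker (τ - 1)) := by
  classical
  have h2K : (2 : K) = 0 := by exact_mod_cast CharP.cast_eq_zero K 2
  have hneg : ∀ a : Module.End K W, -a = a := fun a => by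
    rw [neg_eq_iff_add_eq_zero, ← two_smul K a, h2K, zero_smul]
  set N := φ - 1 with hNdef
  set S := σ - 1 with hSdef
  set T := τ - 1 with hTdef
  have eσ : σ + σ = 0 := by rw [← two_smul K σ, h2K, zero_smul]
  have eτ : τ + τ = 0 := by rw [← two_smul K τ, h2K, zero_smul]
  have e1 : (1 : Module.End K W) + 1 = 0 := by
    rw [← two_smul K (1 : Module.End K W), h2K, zero_smul]
  have hS2 : S * S = 0 := by
    have h : S * S = σ * σ + 1 - (σ + σ) := by rw [hSdef]; noncomm_ring
    rw [h, hσ2, eσ, e1, sub_zero]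
  have hT2 : T * T = 0 := by
    have h : T * T = τ * τ + 1 - (τ + τ) := by rw [hTdef]; noncomm_ring
    rw [h, hτ2, eτ, e1, sub_zero]
  -- N is nilpotent of index exactly 2m+1
  have hNn : N ^ (2 * m + 1) = 0 := by
    have h := minpoly.aeval K φ
    rw [hcyc, hchar, map_pow, map_add, aeval_X, map_one] at h
    rw [hNdef, sub_eq_add_neg, hneg 1]
    exact h
  have hdegX1 : ∀ k : ℕ, (((X : K[X]) + 1) ^ k).natDegree = k := by
    intro k
    rw [natDegree_pow, show ((X : K[X]) + 1) = X + C 1 by rw [C_1],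
      natDegree_X_add_C, mul_one]
  have hN2m : N ^ (2 * m) ≠ 0 := by
    intro h0
    rw [hNdef] at h0
    have hphi : aeval φ (((X : K[X]) + 1) ^ (2 * m)) = 0 := by
      rw [map_pow, map_add, aeval_X, map_one, ← hneg 1, ← sub_eq_add_neg]
      exact h0
    have hdvd : minpoly K φ ∣ ((X : K[X]) + 1) ^ (2 * m) := minpoly.dvd K φ hphi
    have hne : (((X : K[X]) + 1) ^ (2 * m)) ≠ 0 := by
      apply pow_ne_zero
      rw [show ((X : K[X]) + 1) = X + C 1 by rw [C_1]]
      exact X_add_C_ne_zero 1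
    have hle := Polynomial.natDegree_le_of_dvd hdvd hne
    rw [hcyc, hchar, hdegX1, hdegX1] at hle
    omega
  have hker_mono : ∀ j k : ℕ, j ≤ k →
      LinearMap.ker (N ^ j) ≤ LinearMap.ker (N ^ k) := by
    intro j k hjk
    rw [show k = (k - j) + j by omega, pow_add, Module.End.mul_eq_comp]
    exact LinearMap.ker_le_ker_comp _ _
  have hstrict : ∀ k, k ≤ 2 * m →
      LinearMap.ker (N ^ k) < LinearMap.ker (N ^ (k + 1)) := by
    intro k hk
    refine lt_of_le_of_ne (hker_mono k (k + 1) (by omega)) ?_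
    intro heq
    have h1 := Module.End.ker_pow_constant heq (2 * m + 1 - k)
    rw [show k + (2 * m + 1 - k) = 2 * m + 1 by omega, hNn, LinearMap.ker_zero] at h1
    have h2 := hker_mono k (2 * m) hk
    rw [h1] at h2
    exact hN2m (LinearMap.ker_eq_top.mp (top_unique h2))
  have hchain : ∀ k, k ≤ 2 * m →
      k + finrank K (LinearMap.ker N) ≤ finrank K (LinearMap.ker (N ^ (k + 1))) := by
    intro k
    induction k with
    | zero => intro _; rw [pow_one]; omega
    | succ k ih =>
      intro hk
      have h1 := ih (by omega)
      have h2 := Submodule.finrank_lt_finrank_of_lt (hstrict (k + 1) hk)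
      omega
  have hkertop : finrank K (LinearMap.ker (N ^ (2 * m + 1))) = 2 * m + 1 := by
    rw [hNn, LinearMap.ker_zero, finrank_top, hdim]
  have hd_le : finrank K (LinearMap.ker N) ≤ 1 := by
    have := hchain (2 * m) le_rfl
    omega
  have hd_ge : 1 ≤ finrank K (LinearMap.ker N) := by
    by_contra h
    have h0 : finrank K (LinearMap.ker N) = 0 := by omega
    have hbot : LinearMap.ker N = ⊥ := Submodule.finrank_eq_zero.mp h0
    have heq : LinearMap.ker (N ^ 0) = LinearMap.ker (N ^ 1) := by
      simp [pow_one, hbot, Module.End.one_eq_id]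
    have h1 := Module.End.ker_pow_constant heq (2 * m + 1)
    rw [zero_add, hNn, LinearMap.ker_zero] at h1
    have h2 : (⊥ : Submodule K W) = ⊤ := by simpa [Module.End.one_eq_id] using h1
    have h3 : (0 : ℕ) = finrank K W := by
      rw [← finrank_bot K W, ← finrank_top K W, h2]
    omega
  have hdN : finrank K (LinearMap.ker N) = 1 := by omega
  have hrkN := LinearMap.finrank_range_add_finrank_ker N
  rw [hdim] at hrkN
  have hrN : finrank K (LinearMap.range N) = 2 * m := by omega
  -- rank bounds for S and T
  have hrange_ker : ∀ f : Module.End K W, f * f = 0 →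
      LinearMap.range f ≤ LinearMap.ker f := by
    intro f hf
    rw [LinearMap.range_le_ker_iff, ← Module.End.mul_eq_comp]
    exact hf
  have hrkS := LinearMap.finrank_range_add_finrank_ker S
  rw [hdim] at hrkS
  have hrkT := LinearMap.finrank_range_add_finrank_ker T
  rw [hdim] at hrkT
  have hrS_le : finrank K (LinearMap.range S) ≤ m := by
    have := Submodule.finrank_mono (hrange_ker S hS2)
    omega
  have hrT_le : finrank K (LinearMap.range T) ≤ m := by
    have := Submodule.finrank_mono (hrange_ker T hT2)
    omega
  -- range N ≤ range S ⊔ range T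
  have hsuple : LinearMap.range N ≤ LinearMap.range S ⊔ LinearMap.range T := by
    rintro y ⟨x, rfl⟩
    have hx : N x = S (τ x) + T x := by
      simp only [hNdef, hSdef, hTdef, hφ, LinearMap.sub_apply, Module.End.mul_apply,
        Module.End.one_apply]
      abel
    rw [hx]
    exact Submodule.add_mem_sup (LinearMap.mem_range_self S (τ x))
      (LinearMap.mem_range_self T x)
  have hsupinf := Submodule.finrank_sup_add_finrank_inf_eq (LinearMap.range S)
    (LinearMap.range T)
  have hsup_ge : 2 * m ≤ finrank K ↥(LinearMap.range S ⊔ LinearMap.range T) := by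
    have := Submodule.finrank_mono hsuple
    omega
  have hrS : finrank K (LinearMap.range S) = m := by omega
  have hrT : finrank K (LinearMap.range T) = m := by omega
  have hkS : finrank K (LinearMap.ker S) = m + 1 := by omega
  have hkT : finrank K (LinearMap.ker T) = m + 1 := by omega
  have hinfbot : LinearMap.range S ⊓ LinearMap.range T = ⊥ :=
    Submodule.finrank_eq_zero.mp (by omega)
  have hrangeeq : LinearMap.range N = LinearMap.range S ⊔ LinearMap.range T :=
    Submodule.eq_of_le_of_finrank_le hsuple (by omega)
  -- kernels
  have hker_le : LinearMap.ker S ⊓ LinearMap.ker T ≤ LinearMap.ker N := by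
    intro x hx
    obtain ⟨h1, h2⟩ := Submodule.mem_inf.mp hx
    rw [LinearMap.mem_ker, hSdef, LinearMap.sub_apply, Module.End.one_apply,
      sub_eq_zero] at h1
    rw [LinearMap.mem_ker, hTdef, LinearMap.sub_apply, Module.End.one_apply,
      sub_eq_zero] at h2
    rw [LinearMap.mem_ker, hNdef, LinearMap.sub_apply, Module.End.one_apply,
      sub_eq_zero, hφ, Module.End.mul_apply, h2, h1]
  have hker2 := Submodule.finrank_sup_add_finrank_inf_eq (LinearMap.ker S)
    (LinearMap.ker T)
  have hsup_le : finrank K ↥(LinearMap.ker S ⊔ LinearMap.ker T) ≤ 2 * m + 1 := by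
    rw [← hdim]
    exact Submodule.finrank_le _
  have hkereq : LinearMap.ker N = LinearMap.ker S ⊓ LinearMap.ker T :=
    (Submodule.eq_of_le_of_finrank_le hker_le (by omega)).symm
  exact ⟨⟨hkS, hkT, hrS, hrT⟩, ⟨hrangeeq, hinfbot, hkereq⟩⟩
end
end

section
/- Let K be a field of characteristic 2 and W a K-vector space of dimension 2m+1 with m ≥ 1. Let φ ∈ GL(W) be cyclic with characteristic polynomial (x + 1)^{2m+1}. Suppose φ = σ∘τ where σ, τ ∈ GL(W) are involutions (σ² = τ² = id). Then either W = ker(τ − id) ⊕ range(σ − id) or W = ker(σ − id) ⊕ range(τ − id) (at least one of these direct sum decompositions holds). -/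
open Module Polynomial

noncomputable section

lemma li_of_orders {K W : Type*} [Field K] [AddCommGroup W] [Module K W]
    {n r : ℕ} (B : Basis (Fin n) K W) (v : Fin r → W) (o : Fin r → Fin n)
    (ho : StrictMono o)
    (hnz : ∀ i, B.repr (v i) (o i) ≠ 0)
    (hz : ∀ i (p : Fin n), (p : ℕ) < (o i : ℕ) → B.repr (v i) p = 0) :
    LinearIndependent K v := by
  rw [Fintype.linearIndependent_iff]
  intro g hg
  have key : ∀ N, ∀ i : Fin r, (i : ℕ) < N → g i = 0 := by
    intro N
    induction N with
    | zero => intro i hi; omega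
    | succ N ih =>
      intro i hi
      rcases Nat.lt_or_ge (i : ℕ) N with h | h
      · exact ih i h
      have hiN : (i : ℕ) = N := by omega
      have e0 : (B.repr (∑ k, g k • v k)) (o i) = 0 := by rw [hg]; simp
      rw [map_sum] at e0
      rw [Finsupp.finset_sum_apply] at e0
      have e1 : ∀ k, (B.repr (g k • v k)) (o i) = g k * (B.repr (v k)) (o i) := by
        intro k; rw [map_smul, Finsupp.smul_apply, smul_eq_mul]
      simp only [e1] at e0
      rw [Finset.sum_eq_single i] at e0
      · rcases mul_eq_zero.1 e0 with h' | h'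
        · exact h'
        · exact absurd h' (hnz i)
      · intro k _ hk
        rcases lt_or_gt_of_ne hk with hlt | hgt
        · rw [ih k (by omega : (k:ℕ) < N)]; ring
        · rw [hz k (o i) (ho hgt)]; ring
      · intro h'; exact absurd (Finset.mem_univ i) h'
  exact fun i => key (i + 1) i (by omega)

lemma li_cyclic {K W : Type*} [Field K] [AddCommGroup W] [Module K W]
    {n : ℕ} (D : Module.End K W) (w : W) (hD : D ^ n = 0)
    (hw : (D ^ (n - 1)) w ≠ 0) :
    LinearIndependent K (fun i : Fin n => (D ^ (i : ℕ)) w) := by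
  rw [Fintype.linearIndependent_iff]
  intro g hg
  have key : ∀ N, ∀ i : Fin n, (i : ℕ) < N → g i = 0 := by
    intro N
    induction N with
    | zero => intro i hi; omega
    | succ N ih =>
      intro i hi
      rcases Nat.lt_or_ge (i : ℕ) N with h | h
      · exact ih i h
      have hiN : (i : ℕ) = N := by omega
      have hin : (i : ℕ) < n := i.isLt
      have e0 : (D ^ (n - 1 - (i : ℕ))) (∑ k, g k • (D ^ (k : ℕ)) w) = 0 := by
        rw [hg, map_zero]
      rw [map_sum] at e0
      have e1 : ∀ k : Fin n, (D ^ (n - 1 - (i : ℕ))) (g k • (D ^ (k : ℕ)) w)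
          = g k • (D ^ (n - 1 - (i : ℕ) + (k : ℕ))) w := by
        intro k
        rw [map_smul, ← Module.End.mul_apply, ← pow_add]
      simp only [e1] at e0
      rw [Finset.sum_eq_single i] at e0
      · have hexp : n - 1 - (i : ℕ) + (i : ℕ) = n - 1 := by omega
        rw [hexp] at e0
        rcases smul_eq_zero.1 e0 with h' | h'
        · exact h'
        · exact absurd h' hw
      · intro k _ hk
        rcases lt_or_gt_of_ne hk with hlt | hgt
        · rw [ih k (by omega : (k:ℕ) < N), zero_smul]
        · have : D ^ (n - 1 - (i : ℕ) + (k : ℕ)) = 0 :=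
            pow_eq_zero_of_le (by omega) hD
          rw [this, LinearMap.zero_apply, smul_zero]
      · intro h'; exact absurd (Finset.mem_univ i) h'
  exact fun i => key (i + 1) i (by omega)

theorem complement_decomposition_of_involution_factors_char_two {K W : Type*} [Field K]
    [CharP K 2] [AddCommGroup W] [Module K W] [FiniteDimensional K W]
    {m : ℕ} (hm : 1 ≤ m) (hdim : Module.finrank K W = 2 * m + 1)
    (φ σ τ : Module.End K W)
    (hφ : φ = σ * τ) (hσ2 : σ * σ = 1) (hτ2 : τ * τ = 1)
    (hchar : LinearMap.charpoly φ = (X + 1) ^ (2 * m + 1))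
    (hcyc : minpoly K φ = LinearMap.charpoly φ) :
    IsCompl (LinearMap.ker (τ - 1)) (LinearMap.range (σ - 1)) ∨
      IsCompl (LinearMap.ker (σ - 1)) (LinearMap.range (τ - 1)) := by
  -- characteristic two helpers
  have htwoK : (2 : K) = 0 := by
    have := CharP.cast_eq_zero K 2
    simpa using this
  have hxx : ∀ x : Module.End K W, x + x = 0 := by
    intro x
    have : x + x = (2 : K) • x := by rw [two_smul]
    rw [this, htwoK, zero_smul]
  have hneg : ∀ x : Module.End K W, -x = x := by
    intro x
    exact neg_eq_of_add_eq_zero_left (hxx x)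
  have hsub : ∀ a b : Module.End K W, a - b = b - a := by
    intro a b
    rw [← hneg (a - b), neg_sub]
  set S : Module.End K W := σ - 1 with hSdef
  set T : Module.End K W := τ - 1 with hTdef
  set N : Module.End K W := φ - 1 with hNdef
  set D : Module.End K W := σ - τ with hDdef
  set ψ : Module.End K W := τ * σ with hψdef
  -- basic algebraic identities
  have h2E : (2 : Module.End K W) = 0 := by
    have := hxx 1; simpa [one_add_one_eq_two] using this
  have hS2 : S * S = 0 := by
    have h1 : S * S = 2 * (1 - σ) + (σ * σ - 1) := by rw [hSdef]; noncomm_ring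
    rw [h1, hσ2, h2E]; noncomm_ring
  have hT2 : T * T = 0 := by
    have h1 : T * T = 2 * (1 - τ) + (τ * τ - 1) := by rw [hTdef]; noncomm_ring
    rw [h1, hτ2, h2E]; noncomm_ring
  have hστ : σ * φ = τ := by rw [hφ, ← mul_assoc, hσ2, one_mul]
  have hD : S - T = D := by rw [hSdef, hTdef, hDdef]; noncomm_ring
  have hSD : S * D = D * T := by
    have h1 : S * D - D * T = 2 * (1 - σ * τ) + (σ * σ - 1) + (τ * τ - 1) := by
      rw [hSdef, hDdef, hTdef]; noncomm_ring
    have h2 : S * D - D * T = 0 := by rw [h1, hσ2, hτ2, h2E]; noncomm_ring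
    exact sub_eq_zero.1 h2
  have hTD : T * D = D * S := by
    have h1 : T * D - D * S = 2 * (τ * σ - 1) + (1 - τ * τ) + (1 - σ * σ) := by
      rw [hSdef, hDdef, hTdef]; noncomm_ring
    have h2 : T * D - D * S = 0 := by rw [h1, hσ2, hτ2, h2E]; noncomm_ring
    exact sub_eq_zero.1 h2
  -- N = φ + 1
  have hNeq : N = φ + 1 := by
    rw [hNdef, sub_eq_add_neg, hneg 1]
  -- Cayley-Hamilton: N ^ (2m+1) = 0
  have haev : ∀ k : ℕ, aeval φ ((X + 1 : K[X]) ^ k) = (φ + 1) ^ k := by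
    intro k
    rw [map_pow, map_add, aeval_X, map_one]
  have hNn : N ^ (2 * m + 1) = 0 := by
    have h := LinearMap.aeval_self_charpoly φ
    rw [hchar, haev] at h
    rw [hNeq]; exact h
  have hNn1 : N ^ (2 * m) ≠ 0 := by
    intro hcon
    have h0 : aeval φ ((X + 1 : K[X]) ^ (2 * m)) = 0 := by
      rw [haev, ← hNeq, hcon]
    have hdvd := minpoly.dvd K φ h0
    rw [hcyc, hchar] at hdvd
    have hne : ((X + 1 : K[X]) ^ (2 * m)) ≠ 0 := by
      apply pow_ne_zero
      rw [← C_1]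
      exact X_add_C_ne_zero 1
    have hdeg := Polynomial.natDegree_le_of_dvd hdvd hne
    rw [natDegree_pow, natDegree_pow, ← C_1, natDegree_X_add_C] at hdeg
    omega
  -- D = σ * N and powers of D
  have hDσN : σ * N = D := by
    rw [hNdef, mul_sub, mul_one, hστ, hDdef, hsub]
  have hψφ : ψ * φ = 1 := by
    rw [hψdef, hφ, mul_assoc, ← mul_assoc σ σ τ, hσ2, one_mul, hτ2]
  have hφψ : φ * ψ = 1 := by
    rw [hψdef, hφ, mul_assoc, ← mul_assoc τ τ σ, hτ2, one_mul, hσ2]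
  have hψN : Commute ψ N := by
    have h1 : ψ * N = ψ * φ - ψ := by rw [hNdef]; noncomm_ring
    have h2 : N * ψ = φ * ψ - ψ := by rw [hNdef]; noncomm_ring
    show ψ * N = N * ψ
    rw [h1, h2, hψφ, hφψ]
  have hσNσ : σ * N * σ = ψ * N := by
    have h1 : σ * N * σ = σ * φ * σ - σ * σ := by rw [hNdef]; noncomm_ring
    rw [h1, hστ, hσ2, ← hψdef]
    have h2 : ψ * N = ψ * φ - ψ := by rw [hNdef]; noncomm_ring
    rw [h2, hψφ, hsub]
  have hDD : D * D = ψ * (N * N) := by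
    rw [← hDσN]
    calc σ * N * (σ * N) = (σ * N * σ) * N := by noncomm_ring
    _ = ψ * N * N := by rw [hσNσ]
    _ = ψ * (N * N) := by noncomm_ring
  have hD2m : D ^ (2 * m) = ψ ^ m * N ^ (2 * m) := by
    have h1 : D ^ (2 * m) = (D * D) ^ m := by
      rw [← pow_two, ← pow_mul]
    have h2 : Commute ψ (N * N) := (hψN.mul_right hψN)
    rw [h1, hDD, h2.mul_pow]
    congr 1
    rw [← pow_two, ← pow_mul]
  have hDn : D ^ (2 * m + 1) = 0 := by
    have hNψm : ψ ^ m * N = N * ψ ^ m := (hψN.pow_left m)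
    calc D ^ (2 * m + 1) = D * D ^ (2 * m) := by rw [pow_succ']
    _ = σ * N * (ψ ^ m * N ^ (2 * m)) := by rw [hDσN, hD2m]
    _ = σ * (N * ψ ^ m) * N ^ (2 * m) := by noncomm_ring
    _ = σ * (ψ ^ m * N) * N ^ (2 * m) := by rw [← hNψm]
    _ = σ * ψ ^ m * N ^ (2 * m + 1) := by rw [pow_succ']; noncomm_ring
    _ = 0 := by rw [hNn, mul_zero]
  have hDn1 : D ^ (2 * m) ≠ 0 := by
    intro hcon
    apply hNn1
    have hφψm : φ ^ m * ψ ^ m = 1 := by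
      have hc : Commute φ ψ := by show φ * ψ = ψ * φ; rw [hφψ, hψφ]
      rw [← hc.mul_pow, hφψ, one_pow]
    calc N ^ (2 * m) = (φ ^ m * ψ ^ m) * N ^ (2 * m) := by rw [hφψm, one_mul]
    _ = φ ^ m * (ψ ^ m * N ^ (2 * m)) := by noncomm_ring
    _ = φ ^ m * D ^ (2 * m) := by rw [hD2m]
    _ = 0 := by rw [hcon, mul_zero]
  -- cyclic vector
  obtain ⟨w, hw⟩ : ∃ w : W, (D ^ (2 * m)) w ≠ 0 := by
    by_contra hcon
    push_neg at hcon
    exact hDn1 (LinearMap.ext fun x => by rw [hcon x, LinearMap.zero_apply])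
  have hw' : (D ^ (2 * m + 1 - 1)) w ≠ 0 := by
    simpa using hw
  have hli : LinearIndependent K (fun i : Fin (2 * m + 1) => (D ^ (i : ℕ)) w) :=
    li_cyclic D w hDn hw'
  have hcard : Fintype.card (Fin (2 * m + 1)) = finrank K W := by simp [hdim]
  set B : Basis (Fin (2 * m + 1)) K W :=
    basisOfLinearIndependentOfCardEqFinrank hli hcard with hBdef
  have hB : ∀ i : Fin (2 * m + 1), B i = (D ^ (i : ℕ)) w := by
    intro i
    rw [hBdef, coe_basisOfLinearIndependentOfCardEqFinrank]
  have hn : ∀ i : Fin (2 * m + 1), (i : ℕ) < 2 * m + 1 := fun i => i.isLt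
  -- action of D on basis vectors
  have hDB1 : ∀ (i : Fin (2 * m + 1)) (hi : (i : ℕ) + 1 < 2 * m + 1),
      D (B i) = B ⟨(i : ℕ) + 1, hi⟩ := by
    intro i hi
    rw [hB, hB]
    show D ((D ^ (i : ℕ)) w) = (D ^ ((i : ℕ) + 1)) w
    rw [← Module.End.mul_apply, ← pow_succ']
  have hDBlast : ∀ (i : Fin (2 * m + 1)), (i : ℕ) + 1 = 2 * m + 1 → D (B i) = 0 := by
    intro i hi
    rw [hB]
    show D ((D ^ (i : ℕ)) w) = 0
    rw [← Module.End.mul_apply, ← pow_succ', hi, hDn, LinearMap.zero_apply]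
  -- the shift property of coordinates
  have shift : ∀ (v : W) (j : ℕ) (hj : j + 1 < 2 * m + 1),
      B.repr (D v) ⟨j + 1, hj⟩ = B.repr v ⟨j, by omega⟩ := by
    intro v j hj
    conv_lhs => rw [← B.sum_repr v]
    rw [map_sum, map_sum, Finsupp.finset_sum_apply]
    have e1 : ∀ i : Fin (2 * m + 1),
        (B.repr ((B.repr v) i • D (B i))) ⟨j + 1, hj⟩
          = (B.repr v) i * (B.repr (D (B i))) ⟨j + 1, hj⟩ := by
      intro i
      rw [map_smul, Finsupp.smul_apply, smul_eq_mul]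
    simp only [LinearMap.map_smul, e1]
    rw [Finset.sum_eq_single (⟨j, by omega⟩ : Fin (2 * m + 1))]
    · rw [hDB1 ⟨j, by omega⟩ (by simpa using hj)]
      rw [B.repr_self, Finsupp.single_eq_same, mul_one]
    · intro i _ hij
      rcases Nat.lt_or_ge ((i : ℕ) + 1) (2 * m + 1) with hlt | hge
      · rw [hDB1 i hlt, B.repr_self]
        rw [Finsupp.single_eq_of_ne', mul_zero]
        intro hcon
        apply hij
        have : (i : ℕ) + 1 = j + 1 := by
          have := congrArg (fun x : Fin (2 * m + 1) => (x : ℕ)) hcon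
          simpa using this
        exact Fin.ext (show (i : ℕ) = j by omega)
      · rw [hDBlast i (by have := i.isLt; omega), map_zero, Finsupp.zero_apply, mul_zero]
    · intro h'; exact absurd (Finset.mem_univ _) h'
  have shiftpow : ∀ (k j : ℕ) (v : W) (hj : j + k < 2 * m + 1),
      B.repr ((D ^ k) v) ⟨j + k, hj⟩ = B.repr v ⟨j, by omega⟩ := by
    intro k
    induction k with
    | zero =>
      intro j v hj
      simp
    | succ k ih =>
      intro j v hj
      have h1 : (D ^ (k + 1)) v = (D ^ k) (D v) := by
        rw [pow_succ, Module.End.mul_apply]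
      have h2 : (⟨j + (k + 1), hj⟩ : Fin (2 * m + 1)) = ⟨(j + 1) + k, by omega⟩ :=
        Fin.ext (show j + (k + 1) = (j + 1) + k by omega)
      rw [h1, h2, ih (j + 1) (D v) (by omega), shift v j (by omega)]
  -- tail submodules
  set tail : ℕ → Submodule K W :=
    fun k => Submodule.span K (⇑B '' {i : Fin (2 * m + 1) | k ≤ (i : ℕ)}) with htaildef
  have htail_gen : ∀ (k : ℕ) (i : Fin (2 * m + 1)), k ≤ (i : ℕ) → B i ∈ tail k := by
    intro k i hi
    exact Submodule.subset_span ⟨i, hi, rfl⟩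
  have coordtail : ∀ (k : ℕ) (v : W), v ∈ tail k →
      ∀ (i : Fin (2 * m + 1)), (i : ℕ) < k → B.repr v i = 0 := by
    intro k v hv
    induction hv using Submodule.span_induction with
    | mem x hx =>
      obtain ⟨l, hl, rfl⟩ := hx
      intro i hi
      rw [B.repr_self]
      exact Finsupp.single_eq_of_ne' (fun hcon => by
        rw [hcon] at hl
        have hl' : k ≤ (i : ℕ) := hl
        omega)
    | zero => intro i hi; simp
    | add x y hx hy ihx ihy =>
      intro i hi
      rw [map_add, Finsupp.add_apply, ihx i hi, ihy i hi, add_zero]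
    | smul a x hx ihx =>
      intro i hi
      rw [map_smul, Finsupp.smul_apply, ihx i hi, smul_zero]
  have Dtail : ∀ (k : ℕ) (v : W), v ∈ tail k → D v ∈ tail (k + 1) := by
    intro k v hv
    induction hv using Submodule.span_induction with
    | mem x hx =>
      obtain ⟨l, hl, rfl⟩ := hx
      have hkl : k ≤ (l : ℕ) := hl
      rcases Nat.lt_or_ge ((l : ℕ) + 1) (2 * m + 1) with hlt | hge
      · rw [hDB1 l hlt]
        exact htail_gen (k + 1) _ (Nat.succ_le_succ hkl)
      · rw [hDBlast l (by have := l.isLt; omega)]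
        exact Submodule.zero_mem _
    | zero => rw [map_zero]; exact Submodule.zero_mem _
    | add x y hx hy ihx ihy => rw [map_add]; exact Submodule.add_mem _ ihx ihy
    | smul a x hx ihx => rw [map_smul]; exact Submodule.smul_mem _ a ihx
  have Dpowtail : ∀ (k j : ℕ) (v : W), v ∈ tail j → (D ^ k) v ∈ tail (j + k) := by
    intro k
    induction k with
    | zero => intro j v hv; simpa using hv
    | succ k ih =>
      intro j v hv
      have h1 : (D ^ (k + 1)) v = D ((D ^ k) v) := by
        rw [pow_succ', Module.End.mul_apply]
      rw [h1]
      exact Dtail (j + k) _ (ih j v hv)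
  have Dtop : ∀ v : W, D v ∈ tail 1 := by
    intro v
    have hDv : D v = ∑ i, B.repr v i • D (B i) := by
      conv_lhs => rw [← B.sum_repr v]
      rw [map_sum]
      simp only [map_smul]
    rw [hDv]
    apply Submodule.sum_mem
    intro i _
    apply Submodule.smul_mem
    rcases Nat.lt_or_ge ((i : ℕ) + 1) (2 * m + 1) with hlt | hge
    · rw [hDB1 i hlt]
      exact htail_gen 1 _ (by simp)
    · rw [hDBlast i (by have := i.isLt; omega)]
      exact Submodule.zero_mem _
  have decomp0 : ∀ v : W, ∃ r ∈ tail 1,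
      v = B.repr v ⟨0, by omega⟩ • B ⟨0, by omega⟩ + r := by
    intro v
    refine ⟨∑ i ∈ Finset.univ.erase ⟨0, by omega⟩, B.repr v i • B i, ?_, ?_⟩
    · apply Submodule.sum_mem
      intro i hi
      apply Submodule.smul_mem
      apply htail_gen
      have hne := Finset.ne_of_mem_erase hi
      have : (i : ℕ) ≠ 0 := fun hcon => hne (Fin.ext (by simpa using hcon))
      omega
    · have hsum := Finset.add_sum_erase Finset.univ
        (fun i : Fin (2 * m + 1) => B.repr v i • B i) (Finset.mem_univ ⟨0, by omega⟩)
      conv_lhs => rw [← B.sum_repr v]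
      rw [← hsum]
  have h1n : (1 : ℕ) < 2 * m + 1 := by omega
  have h2mn : 2 * m < 2 * m + 1 := by omega
  have hB0 : B ⟨0, by omega⟩ = w := by
    rw [hB]
    show (D ^ (0 : ℕ)) w = w
    rw [pow_zero, Module.End.one_apply]
  -- A w lies in tail 1 whenever A is square-zero with A * D = D * C
  have mem_tail1 : ∀ A C : Module.End K W, A * A = 0 → A * D = D * C →
      A w ∈ tail 1 := by
    intro A C hA2 hAD
    have hAtail : ∀ v : W, v ∈ tail 1 → A v ∈ tail 1 := by
      intro v hv
      induction hv using Submodule.span_induction with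
      | mem x hx =>
        obtain ⟨l, hl, rfl⟩ := hx
        have hl' : 1 ≤ (l : ℕ) := hl
        have hll : ((l : ℕ) - 1) + 1 = (l : ℕ) := by omega
        have hBl : B l = D ((D ^ ((l : ℕ) - 1)) w) := by
          calc B l = (D ^ ((l : ℕ))) w := hB l
          _ = (D ^ (((l : ℕ) - 1) + 1)) w := by rw [hll]
          _ = D ((D ^ ((l : ℕ) - 1)) w) := by rw [pow_succ', Module.End.mul_apply]
        rw [hBl]
        have hAD' : A (D ((D ^ ((l : ℕ) - 1)) w)) = D (C ((D ^ ((l : ℕ) - 1)) w)) := by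
          rw [← Module.End.mul_apply, hAD, Module.End.mul_apply]
        rw [hAD']
        exact Dtop _
      | zero => rw [map_zero]; exact Submodule.zero_mem _
      | add x y hx hy ihx ihy => rw [map_add]; exact Submodule.add_mem _ ihx ihy
      | smul a x hx ihx => rw [map_smul]; exact Submodule.smul_mem _ a ihx
    obtain ⟨r, hr, hAw⟩ := decomp0 (A w)
    have h0 : A (A w) = 0 := by
      rw [← Module.End.mul_apply, hA2, LinearMap.zero_apply]
    have hexp : (0 : W) = B.repr (A w) ⟨0, by omega⟩ • A w + A r := by
      rw [← h0]
      conv_lhs => rw [hAw]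
      rw [map_add, map_smul, hB0]
    have hco : B.repr (A w) ⟨0, by omega⟩ * B.repr (A w) ⟨0, by omega⟩ = 0 := by
      have := congrArg (fun x : W => B.repr x ⟨0, by omega⟩) hexp
      simp only [map_zero, Finsupp.zero_apply, map_add, Finsupp.add_apply,
        map_smul, Finsupp.smul_apply, smul_eq_mul] at this
      rw [coordtail 1 (A r) (hAtail r hr) ⟨0, by omega⟩ (by norm_num), add_zero] at this
      exact this.symm
    have hc0 : B.repr (A w) ⟨0, by omega⟩ = 0 := mul_self_eq_zero.1 hco
    rw [hAw, hc0, zero_smul, zero_add]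
    exact hr
  have hSw1 : S w ∈ tail 1 := mem_tail1 S T hS2 hSD
  have hTw1 : T w ∈ tail 1 := mem_tail1 T S hT2 hTD
  -- the coordinates at position 1
  have hDw : D w = B ⟨1, h1n⟩ := by
    rw [hB]
    show D w = (D ^ (1 : ℕ)) w
    rw [pow_one]
  have hαβ : B.repr (S w) ⟨1, h1n⟩ - B.repr (T w) ⟨1, h1n⟩ = 1 := by
    have h1 : D w = S w - T w := by
      rw [← hD, LinearMap.sub_apply]
    have h2 : B.repr (D w) ⟨1, h1n⟩ = 1 := by
      rw [hDw, B.repr_self, Finsupp.single_eq_same]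
    rw [h1, map_sub, Finsupp.sub_apply] at h2
    exact h2
  -- kernel of D is spanned by the last basis vector
  have kerD_le : ∀ v : W, D v = 0 →
      v ∈ Submodule.span K {B ⟨2 * m, h2mn⟩} := by
    intro v hv
    have hco : ∀ i : Fin (2 * m + 1), (i : ℕ) < 2 * m → B.repr v i = 0 := by
      intro i hi
      have hsh := shift v (i : ℕ) (by omega)
      rw [hv, map_zero, Finsupp.zero_apply, Fin.eta] at hsh
      exact hsh.symm
    have hvrep : v = B.repr v ⟨2 * m, h2mn⟩ • B ⟨2 * m, h2mn⟩ := by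
      conv_lhs => rw [← B.sum_repr v]
      apply Finset.sum_eq_single
      · intro b _ hb
        have hb' : (b : ℕ) < 2 * m := by
          have := b.isLt
          have : (b : ℕ) ≠ 2 * m := fun hcon => hb (Fin.ext (by simpa using hcon))
          omega
        rw [hco b hb', zero_smul]
      · intro h'; exact absurd (Finset.mem_univ _) h'
    rw [hvrep]
    exact Submodule.smul_mem _ _ (Submodule.mem_span_singleton_self _)
  have hrangeker : ∀ A : Module.End K W, A * A = 0 →
      LinearMap.range A ≤ LinearMap.ker A := by
    intro A hA2
    rintro x ⟨y, rfl⟩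
    apply LinearMap.mem_ker.2
    rw [← Module.End.mul_apply, hA2, LinearMap.zero_apply]
  have hB2m0 : D (B ⟨2 * m, h2mn⟩) = 0 := hDBlast _ rfl
  have hSTkerD : ∀ v : W, S v = 0 → T v = 0 → D v = 0 := by
    intro v hvS hvT
    rw [← hD, LinearMap.sub_apply, hvS, hvT, sub_zero]
  have hinfle : LinearMap.ker S ⊓ LinearMap.ker T ≤
      Submodule.span K {B ⟨2 * m, h2mn⟩} := by
    rintro v ⟨hvS, hvT⟩
    exact kerD_le v (hSTkerD v (LinearMap.mem_ker.1 hvS) (LinearMap.mem_ker.1 hvT))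
  -- rank counting
  have e1 := LinearMap.finrank_range_add_finrank_ker S
  have e2 := LinearMap.finrank_range_add_finrank_ker T
  rw [hdim] at e1 e2
  have e3 : finrank K (LinearMap.range S) ≤ finrank K (LinearMap.ker S) :=
    Submodule.finrank_mono (hrangeker S hS2)
  have e4 : finrank K (LinearMap.range T) ≤ finrank K (LinearMap.ker T) :=
    Submodule.finrank_mono (hrangeker T hT2)
  have e5 : finrank K ↥(LinearMap.ker S ⊓ LinearMap.ker T) ≤ 1 := by
    have h := Submodule.finrank_mono hinfle
    rw [finrank_span_singleton (B.ne_zero _)] at h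
    exact h
  have e6 := Submodule.finrank_sup_add_finrank_inf_eq (LinearMap.ker S) (LinearMap.ker T)
  have e7 : finrank K ↥(LinearMap.ker S ⊔ LinearMap.ker T) ≤ 2 * m + 1 := by
    rw [← hdim]; exact Submodule.finrank_le _
  have hrS : finrank K (LinearMap.range S) = m := by omega
  have hrT : finrank K (LinearMap.range T) = m := by omega
  have hkS : finrank K (LinearMap.ker S) = m + 1 := by omega
  have hkT : finrank K (LinearMap.ker T) = m + 1 := by omega
  -- the key lemma: if the coordinate of (A w) at position 1 is nonzero,
  -- then the last basis vector is not in the range of A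
  have core : ∀ A C : Module.End K W, A * A = 0 → A * D = D * C → C * D = D * A →
      finrank K (LinearMap.range A) = m → A w ∈ tail 1 →
      B.repr (A w) ⟨1, h1n⟩ ≠ 0 →
      B ⟨2 * m, h2mn⟩ ∉ LinearMap.range A := by
    intro A C hA2 hAD hCD hrkA hAw1 hα hmem
    have hAD2 : A * (D * D) = (D * D) * A := by
      calc A * (D * D) = (A * D) * D := by noncomm_ring
      _ = D * (C * D) := by rw [hAD]; noncomm_ring
      _ = D * (D * A) := by rw [hCD]
      _ = (D * D) * A := by noncomm_ring
    have hADpow : ∀ i : ℕ, A * D ^ (2 * i) = D ^ (2 * i) * A := by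
      intro i
      have hcomm : Commute A (D * D) := hAD2
      have h := hcomm.pow_right i
      have hdd : (D * D) ^ i = D ^ (2 * i) := by
        rw [← pow_two, ← pow_mul]
      rw [← hdd]
      exact h
    have hAe : ∀ (i : ℕ) (hi : i < m) (h2i : 2 * i < 2 * m + 1),
        A (B ⟨2 * i, h2i⟩) = (D ^ (2 * i)) (A w) := by
      intro i hi h2i
      rw [hB]
      show A ((D ^ (2 * i)) w) = (D ^ (2 * i)) (A w)
      rw [← Module.End.mul_apply, hADpow i, Module.End.mul_apply]
    have hbound : ∀ i : Fin m, 2 * (i : ℕ) < 2 * m + 1 := by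
      intro i; have := i.isLt; omega
    have hbound1 : ∀ i : Fin m, 2 * (i : ℕ) + 1 < 2 * m + 1 := by
      intro i; have := i.isLt; omega
    set u : Fin (m + 1) → W :=
      Fin.snoc (fun i : Fin m => A (B ⟨2 * (i : ℕ), hbound i⟩)) (B ⟨2 * m, h2mn⟩)
      with hudef
    set o : Fin (m + 1) → Fin (2 * m + 1) :=
      Fin.snoc (fun i : Fin m => ⟨2 * (i : ℕ) + 1, hbound1 i⟩) ⟨2 * m, h2mn⟩
      with hodef
    have hulast : u (Fin.last m) = B ⟨2 * m, h2mn⟩ := by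
      rw [hudef, Fin.snoc_last]
    have hucast : ∀ i : Fin m, u i.castSucc = A (B ⟨2 * (i : ℕ), hbound i⟩) := by
      intro i; rw [hudef, Fin.snoc_castSucc]
    have holast : o (Fin.last m) = ⟨2 * m, h2mn⟩ := by
      rw [hodef, Fin.snoc_last]
    have hocast : ∀ i : Fin m, o i.castSucc = ⟨2 * (i : ℕ) + 1, hbound1 i⟩ := by
      intro i; rw [hodef, Fin.snoc_castSucc]
    have ho : StrictMono o := by
      intro i j hij
      induction j using Fin.lastCases with
      | last =>
        induction i using Fin.lastCases with
        | last => exact absurd hij (lt_irrefl _)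
        | cast i =>
          rw [holast, hocast]
          exact Fin.mk_lt_mk.2 (by have := i.isLt; omega)
      | cast j =>
        induction i using Fin.lastCases with
        | last => exact absurd hij (not_lt.mpr (Fin.castSucc_lt_last j).le)
        | cast i =>
          rw [hocast, hocast]
          have hij' : (i : ℕ) < (j : ℕ) := by
            have : (i.castSucc : ℕ) < (j.castSucc : ℕ) := hij
            simpa using this
          exact Fin.mk_lt_mk.2 (by omega)
    have hmemu : ∀ i : Fin (m + 1), u i ∈ LinearMap.range A := by
      intro i
      induction i using Fin.lastCases with
      | last => rw [hulast]; exact hmem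
      | cast i => rw [hucast]; exact ⟨_, rfl⟩
    have hztail : ∀ i : Fin (m + 1), u i ∈ tail ((o i : ℕ)) := by
      intro i
      induction i using Fin.lastCases with
      | last =>
        rw [hulast, holast]
        exact htail_gen _ _ (le_refl _)
      | cast i =>
        rw [hucast, hocast]
        rw [hAe (i : ℕ) i.isLt (hbound i)]
        have h := Dpowtail (2 * (i : ℕ)) 1 (A w) hAw1
        have hco : (1 + 2 * (i : ℕ)) = ((⟨2 * (i : ℕ) + 1, hbound1 i⟩ :
            Fin (2 * m + 1)) : ℕ) := by simp; omega
        rw [hco] at h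
        exact h
    have hz : ∀ (i : Fin (m + 1)) (p : Fin (2 * m + 1)),
        (p : ℕ) < ((o i) : ℕ) → B.repr (u i) p = 0 := by
      intro i p hp
      exact coordtail _ _ (hztail i) p hp
    have hnz : ∀ i : Fin (m + 1), B.repr (u i) (o i) ≠ 0 := by
      intro i
      induction i using Fin.lastCases with
      | last =>
        rw [hulast, holast, B.repr_self, Finsupp.single_eq_same]
        exact one_ne_zero
      | cast i =>
        rw [hucast, hocast]
        rw [hAe (i : ℕ) i.isLt (hbound i)]
        have h := shiftpow (2 * (i : ℕ)) 1 (A w) (by have := i.isLt; omega)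
        have hco : (⟨2 * (i : ℕ) + 1, hbound1 i⟩ :
            Fin (2 * m + 1)) = ⟨1 + 2 * (i : ℕ), by have := i.isLt; omega⟩ :=
          Fin.ext (by simp; omega)
        rw [hco, h]
        exact hα
    have hli2 : LinearIndependent K u := li_of_orders B u o ho hnz hz
    have hle : Submodule.span K (Set.range u) ≤ LinearMap.range A := by
      rw [Submodule.span_le]
      rintro x ⟨i, rfl⟩
      exact hmemu i
    have hcard2 := finrank_span_eq_card hli2
    have hfin := Submodule.finrank_mono hle
    rw [hcard2, hrkA] at hfin
    simp only [Fintype.card_fin] at hfin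
    omega
  -- assemble the result
  have hαβcase : B.repr (S w) ⟨1, h1n⟩ ≠ 0 ∨ B.repr (T w) ⟨1, h1n⟩ ≠ 0 := by
    by_contra h
    push_neg at h
    rw [h.1, h.2, sub_zero] at hαβ
    exact one_ne_zero hαβ.symm
  have final : ∀ A C : Module.End K W, A * A = 0 → C * C = 0 → A - C = D →
      finrank K (LinearMap.range A) = m → finrank K (LinearMap.ker C) = m + 1 →
      B ⟨2 * m, h2mn⟩ ∉ LinearMap.range A →
      IsCompl (LinearMap.ker C) (LinearMap.range A) := by
    intro A C hA2 hC2 hACD hrkA hkC hnotin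
    have hdisj : Disjoint (LinearMap.ker C) (LinearMap.range A) := by
      rw [Submodule.disjoint_def]
      intro v hvC hvA
      have hvA0 : A v = 0 := LinearMap.mem_ker.1 (hrangeker A hA2 hvA)
      have hvD : D v = 0 := by
        rw [← hACD, LinearMap.sub_apply, hvA0, LinearMap.mem_ker.1 hvC, sub_zero]
      have hsp := kerD_le v hvD
      rw [Submodule.mem_span_singleton] at hsp
      obtain ⟨c, rfl⟩ := hsp
      by_cases hc : c = 0
      · rw [hc, zero_smul]
      · exfalso
        apply hnotin
        have hrw : B ⟨2 * m, h2mn⟩ = c⁻¹ • (c • B ⟨2 * m, h2mn⟩) := by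
          rw [smul_smul, inv_mul_cancel₀ hc, one_smul]
        rw [hrw]
        exact Submodule.smul_mem _ _ hvA
    have hcodis : LinearMap.ker C ⊔ LinearMap.range A = ⊤ := by
      apply Submodule.eq_top_of_finrank_eq
      have h6 := Submodule.finrank_sup_add_finrank_inf_eq
        (LinearMap.ker C) (LinearMap.range A)
      rw [disjoint_iff.1 hdisj, finrank_bot, add_zero] at h6
      rw [h6, hkC, hrkA, hdim]
      omega
    exact ⟨hdisj, codisjoint_iff.2 hcodis⟩
  rcases hαβcase with hα | hβ
  · left
    exact final S T hS2 hT2 hD hrS hkT (core S T hS2 hSD hTD hrS hSw1 hα)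
  · right
    have hDTS : T - S = D := by rw [hsub T S, hD]
    exact final T S hT2 hS2 hDTS hrT hkS (core T S hT2 hTD hSD hrT hTw1 hβ)
end
end

section
/- Let K be a field of characteristic ≠ 2 and P ∈ Sp(4, K) with P² = I₄ and P ≠ ±I₄ (a nonscalar involution). Then for every invertible 2×2 matrix M over K with trace(M) = 0, there exists Q ∈ Sp(4, K) such that the upper-left 2×2 block of Q P Q⁻¹ equals M. -/
open Matrix

noncomputable section

/-- The standard symplectic form matrix `G = [[0, Iₙ], [-Iₙ, 0]]`. -/
def sympJ (n : ℕ) (K : Type*) [Field K] : Matrix (Fin n ⊕ Fin n) (Fin n ⊕ Fin n) K :=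
  Matrix.fromBlocks 0 1 (-1) 0

/-- Membership in the standard symplectic group `Sp(2n, K)`: `P G Pᵀ = G`. -/
def IsSymplectic {n : ℕ} {K : Type*} [Field K]
    (P : Matrix (Fin n ⊕ Fin n) (Fin n ⊕ Fin n) K) : Prop :=
  P * sympJ n K * Pᵀ = sympJ n K

section Aux
variable {n : ℕ} {K : Type*} [Field K]


lemma sympJ_mul_self : sympJ n K * sympJ n K = -1 := by
  rw [sympJ, Matrix.fromBlocks_multiply, ← Matrix.fromBlocks_one, Matrix.fromBlocks_neg]
  simp

lemma neg_sympJ_mul_sympJ : (-(sympJ n K)) * sympJ n K = 1 := by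
  rw [neg_mul, sympJ_mul_self, neg_neg]

lemma sympJ_mul_neg_sympJ : (sympJ n K) * (-(sympJ n K)) = 1 := by
  rw [mul_neg, sympJ_mul_self, neg_neg]

lemma sympJ_transpose : (sympJ n K)ᵀ = -(sympJ n K) := by
  rw [sympJ, Matrix.fromBlocks_transpose, Matrix.fromBlocks_neg]
  simp

lemma symp_mul {A B : Matrix (Fin n ⊕ Fin n) (Fin n ⊕ Fin n) K}
    (hA : IsSymplectic A) (hB : IsSymplectic B) : IsSymplectic (A * B) := by
  unfold IsSymplectic at *
  rw [Matrix.transpose_mul]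
  calc A * B * sympJ n K * (Bᵀ * Aᵀ) = A * (B * sympJ n K * Bᵀ) * Aᵀ := by noncomm_ring
  _ = A * sympJ n K * Aᵀ := by rw [hB]
  _ = sympJ n K := hA

lemma symp_right_inv {A : Matrix (Fin n ⊕ Fin n) (Fin n ⊕ Fin n) K}
    (hA : IsSymplectic A) : A * (sympJ n K * Aᵀ * (-(sympJ n K))) = 1 := by
  calc A * (sympJ n K * Aᵀ * (-(sympJ n K))) = (A * sympJ n K * Aᵀ) * (-(sympJ n K)) := by
        noncomm_ring
  _ = 1 := by rw [hA, sympJ_mul_neg_sympJ]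

lemma symp_transpose {A : Matrix (Fin n ⊕ Fin n) (Fin n ⊕ Fin n) K}
    (hA : IsSymplectic A) : IsSymplectic Aᵀ := by
  unfold IsSymplectic
  rw [Matrix.transpose_transpose]
  have h1 : (sympJ n K * Aᵀ * (-(sympJ n K))) * A = 1 :=
    mul_eq_one_comm.mp (symp_right_inv hA)
  have h2 : (-(sympJ n K)) * ((sympJ n K * Aᵀ * (-(sympJ n K))) * A) = (-(sympJ n K)) * 1 := by
    rw [h1]
  have h3 : (-(sympJ n K)) * ((sympJ n K * Aᵀ * (-(sympJ n K))) * A)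
      = -(Aᵀ * sympJ n K * A) := by
    calc (-(sympJ n K)) * ((sympJ n K * Aᵀ * (-(sympJ n K))) * A)
        = ((-(sympJ n K)) * sympJ n K) * (Aᵀ * ((-(sympJ n K)) * A)) := by noncomm_ring
    _ = Aᵀ * ((-(sympJ n K)) * A) := by rw [neg_sympJ_mul_sympJ, one_mul]
    _ = -(Aᵀ * sympJ n K * A) := by noncomm_ring
  have h4 : -(Aᵀ * sympJ n K * A) = -(sympJ n K) := by rw [← h3, h2, mul_one]
  exact neg_injective h4

lemma symp_inv {A : Matrix (Fin n ⊕ Fin n) (Fin n ⊕ Fin n) K}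
    (hA : IsSymplectic A) : IsSymplectic A⁻¹ := by
  have hinv : A⁻¹ = sympJ n K * Aᵀ * (-(sympJ n K)) := Matrix.inv_eq_right_inv (symp_right_inv hA)
  have ht : Aᵀ * sympJ n K * A = sympJ n K := symp_transpose hA
  unfold IsSymplectic
  rw [hinv, Matrix.transpose_mul, Matrix.transpose_mul, Matrix.transpose_neg,
    Matrix.transpose_transpose, sympJ_transpose, neg_neg]
  calc sympJ n K * Aᵀ * -(sympJ n K) * sympJ n K * (sympJ n K * (A * (-(sympJ n K))))
      = (sympJ n K * Aᵀ) * ((-(sympJ n K)) * sympJ n K) * (sympJ n K * A * (-(sympJ n K))) := by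
        noncomm_ring
  _ = (sympJ n K * Aᵀ) * (sympJ n K * A * (-(sympJ n K))) := by
        rw [neg_sympJ_mul_sympJ, mul_one]
  _ = sympJ n K * (Aᵀ * sympJ n K * A) * (-(sympJ n K)) := by noncomm_ring
  _ = sympJ n K := by rw [ht, sympJ_mul_self, neg_one_mul, neg_neg]


def sympForm (x y : (Fin n ⊕ Fin n) → K) : K := x ⬝ᵥ (sympJ n K *ᵥ y)

lemma sympForm_nondeg {x : (Fin n ⊕ Fin n) → K} (h : ∀ y, sympForm x y = 0) : x = 0 := by
  funext i
  have := h ((-(sympJ n K)) *ᵥ Pi.single i 1)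
  rw [sympForm, Matrix.mulVec_mulVec, mul_neg, sympJ_mul_self, neg_neg, Matrix.one_mulVec] at this
  simpa [dotProduct_single] using this

lemma sympForm_invariant {A : Matrix (Fin n ⊕ Fin n) (Fin n ⊕ Fin n) K}
    (hA : Aᵀ * sympJ n K * A = sympJ n K) (x y : (Fin n ⊕ Fin n) → K) :
    sympForm (A *ᵥ x) (A *ᵥ y) = sympForm x y := by
  rw [sympForm, sympForm, Matrix.mulVec_mulVec, Matrix.dotProduct_mulVec,
    ← Matrix.vecMul_transpose, Matrix.vecMul_vecMul, ← mul_assoc, hA,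
    ← Matrix.dotProduct_mulVec]

lemma sympForm_antisymm (x y : (Fin n ⊕ Fin n) → K) : sympForm y x = -sympForm x y := by
  rw [sympForm, sympForm, Matrix.dotProduct_mulVec, dotProduct_comm,
    ← Matrix.mulVec_transpose, sympJ_transpose, Matrix.neg_mulVec, dotProduct_neg]

lemma sympForm_smul_right (x y : (Fin n ⊕ Fin n) → K) (a : K) :
    sympForm x (a • y) = a * sympForm x y := by
  rw [sympForm, Matrix.mulVec_smul, dotProduct_smul, smul_eq_mul, sympForm]

lemma sympForm_add_right (x y z : (Fin n ⊕ Fin n) → K) :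
    sympForm x (y + z) = sympForm x y + sympForm x z := by
  rw [sympForm, Matrix.mulVec_add, dotProduct_add, sympForm, sympForm]

lemma exists_eigpair (hchar : (2 : K) ≠ 0)
    {P : Matrix (Fin n ⊕ Fin n) (Fin n ⊕ Fin n) K}
    (hPt : Pᵀ * sympJ n K * P = sympJ n K) (hP2 : P * P = 1)
    (c : K) (hc : c * c = 1) (hne : (1 : Matrix (Fin n ⊕ Fin n) (Fin n ⊕ Fin n) K) + c • P ≠ 0) :
    ∃ e f : (Fin n ⊕ Fin n) → K,
      P *ᵥ e = c • e ∧ P *ᵥ f = c • f ∧ sympForm e f = 1 := by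
  set A := (1 : Matrix (Fin n ⊕ Fin n) (Fin n ⊕ Fin n) K) + c • P with hA
  have hmat : P * A = c • A := by
    rw [hA, mul_add, mul_one, mul_smul_comm, hP2, smul_add, smul_smul, hc, one_smul]
    abel
  -- eigen property for anything in range of A
  have heig : ∀ z, P *ᵥ (A *ᵥ z) = c • (A *ᵥ z) := by
    intro z
    rw [Matrix.mulVec_mulVec, hmat, Matrix.smul_mulVec]
  -- existence of nonzero vector in range
  have hex : ∃ x, A *ᵥ x ≠ 0 := by
    by_contra h
    push_neg at h
    apply hne
    ext i j
    have := congrFun (h (Pi.single j 1)) i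
    simpa [Matrix.mulVec_single] using this
  obtain ⟨x, hx⟩ := hex
  obtain ⟨e, hx, heP⟩ : ∃ e, e ≠ 0 ∧ P *ᵥ e = c • e := ⟨A *ᵥ x, hx, heig x⟩
  -- form with P in second argument
  have hform : ∀ y, sympForm e (P *ᵥ y) = c * sympForm e y := by
    intro y
    have h1 := sympForm_invariant hPt e (P *ᵥ y)
    rw [Matrix.mulVec_mulVec, hP2, Matrix.one_mulVec, heP] at h1
    rw [← h1, sympForm, smul_dotProduct, ← sympForm, smul_eq_mul]
  -- existence of y with nonzero pairing
  have hey : ∃ y, sympForm e (A *ᵥ y) ≠ 0 := by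
    by_contra h
    push_neg at h
    apply hx
    apply sympForm_nondeg
    intro y
    have h0 := h y
    have hAy : A *ᵥ y = y + c • (P *ᵥ y) := by
      rw [hA, Matrix.add_mulVec, Matrix.one_mulVec, Matrix.smul_mulVec]
    rw [hAy, sympForm_add_right, sympForm_smul_right, hform y, ← mul_assoc, hc, one_mul] at h0
    have h2 : 2 * sympForm e y = 0 := by rw [two_mul]; exact h0
    exact (mul_eq_zero.mp h2).resolve_left hchar
  obtain ⟨y, hy⟩ := hey
  refine ⟨e, (sympForm e (A *ᵥ y))⁻¹ • (A *ᵥ y), heP, ?_, ?_⟩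
  · rw [Matrix.mulVec_smul, heig, smul_comm]
  · rw [sympForm_smul_right, inv_mul_cancel₀ hy]

lemma sympForm_self (hchar : (2 : K) ≠ 0) (x : (Fin n ⊕ Fin n) → K) : sympForm x x = 0 := by
  have h := sympForm_antisymm x x
  have h2 : 2 * sympForm x x = 0 := by rw [two_mul]; nth_rewrite 1 [h]; ring
  exact (mul_eq_zero.mp h2).resolve_left hchar

lemma sympForm_cross (hchar : (2 : K) ≠ 0)
    {P : Matrix (Fin n ⊕ Fin n) (Fin n ⊕ Fin n) K}
    (hPt : Pᵀ * sympJ n K * P = sympJ n K)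
    {u w : (Fin n ⊕ Fin n) → K} (hu : P *ᵥ u = u) (hw : P *ᵥ w = -w) :
    sympForm u w = 0 := by
  have h := sympForm_invariant hPt u w
  rw [hu, hw, ← neg_one_smul K w, sympForm_smul_right] at h
  have h2 : 2 * sympForm u w = 0 := by rw [two_mul]; nth_rewrite 1 [← h]; ring
  exact (mul_eq_zero.mp h2).resolve_left hchar

lemma gram_entry (colv : (Fin n ⊕ Fin n) → (Fin n ⊕ Fin n) → K) (i j : Fin n ⊕ Fin n) :
    ((Matrix.of fun k i => colv i k)ᵀ * sympJ n K * (Matrix.of fun k i => colv i k)) i j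
      = sympForm (colv i) (colv j) := by
  rw [Matrix.mul_assoc]
  simp [Matrix.mul_apply, Matrix.mulVec, dotProduct, sympForm, Finset.mul_sum]

lemma mul_col_eq {P : Matrix (Fin n ⊕ Fin n) (Fin n ⊕ Fin n) K}
    (colv : (Fin n ⊕ Fin n) → (Fin n ⊕ Fin n) → K) (dv : (Fin n ⊕ Fin n) → K)
    (h : ∀ i, P *ᵥ colv i = dv i • colv i) :
    P * (Matrix.of fun k i => colv i k) = (Matrix.of fun k i => colv i k) * Matrix.diagonal dv := by
  ext k i
  rw [Matrix.mul_diagonal]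
  have hh := congrFun (h i) k
  simp only [Matrix.mulVec, dotProduct, Pi.smul_apply, smul_eq_mul] at hh
  simp [Matrix.mul_apply, hh, mul_comm]

end Aux

theorem principal_corner_of_nonscalar_involution_sp4 {K : Type*} [Field K]
    (hchar : (2 : K) ≠ 0)
    (P : Matrix (Fin 2 ⊕ Fin 2) (Fin 2 ⊕ Fin 2) K) (hP : IsSymplectic P)
    (hP2 : P * P = 1) (hP1 : P ≠ 1) (hPm1 : P ≠ -1) :
    ∀ M : Matrix (Fin 2) (Fin 2) K, IsUnit M.det → Matrix.trace M = 0 →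
      ∃ Q : Matrix (Fin 2 ⊕ Fin 2) (Fin 2 ⊕ Fin 2) K, IsSymplectic Q ∧
        (Q * P * Q⁻¹).toBlocks₁₁ = M := by
  intro M hMdet htr
  have hPt : Pᵀ * sympJ 2 K * P = sympJ 2 K := by
    have := symp_transpose hP
    rwa [IsSymplectic, Matrix.transpose_transpose] at this
  -- eigenpairs
  have hne1 : (1 : Matrix (Fin 2 ⊕ Fin 2) (Fin 2 ⊕ Fin 2) K) + (1 : K) • P ≠ 0 := by
    rw [one_smul]
    intro h
    exact hPm1 (by rw [eq_neg_of_add_eq_zero_right h])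
  have hne2 : (1 : Matrix (Fin 2 ⊕ Fin 2) (Fin 2 ⊕ Fin 2) K) + (-1 : K) • P ≠ 0 := by
    rw [neg_one_smul]
    intro h
    have := eq_neg_of_add_eq_zero_right h
    exact hP1 (neg_injective this)
  obtain ⟨e, f, heP, hfP, hef⟩ := exists_eigpair hchar hPt hP2 1 (by ring) hne1
  obtain ⟨e', f', heP', hfP', hef'⟩ := exists_eigpair hchar hPt hP2 (-1) (by ring) hne2
  rw [one_smul] at heP hfP
  rw [neg_one_smul] at heP' hfP'
  -- the form facts
  have hcross : ∀ u w, P *ᵥ u = u → P *ᵥ w = -w → sympForm u w = 0 ∧ sympForm w u = 0 := by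
    intro u w hu hw
    have h1 := sympForm_cross hchar hPt hu hw
    refine ⟨h1, ?_⟩
    rw [sympForm_antisymm, h1, neg_zero]
  -- build R
  set colv : (Fin 2 ⊕ Fin 2) → (Fin 2 ⊕ Fin 2) → K := Sum.elim ![e, e'] ![f, f'] with hcolv
  set dv : (Fin 2 ⊕ Fin 2) → K := Sum.elim ![(1 : K), -1] ![(1 : K), -1] with hdv
  set R : Matrix (Fin 2 ⊕ Fin 2) (Fin 2 ⊕ Fin 2) K := Matrix.of fun k i => colv i k with hR
  have hgram : Rᵀ * sympJ 2 K * R = sympJ 2 K := by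
    ext i j
    rw [hR, gram_entry colv i j]
    rcases i with i | i <;> rcases j with j | j <;> fin_cases i <;> fin_cases j <;>
      simp [hcolv, sympJ, sympForm_self hchar, hef, hef',
        (hcross e e' heP heP').1, (hcross e e' heP heP').2,
        (hcross e f' heP hfP').1, (hcross e f' heP hfP').2,
        (hcross f e' hfP heP').1, (hcross f e' hfP heP').2,
        (hcross f f' hfP hfP').1, (hcross f f' hfP hfP').2,
        sympForm_antisymm e f, sympForm_antisymm e' f']
  have hcol : ∀ i, P *ᵥ colv i = dv i • colv i := by
    rintro (i | i) <;> fin_cases i <;>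
      simp [hcolv, hdv, heP, hfP, heP', hfP']
  have hPR : P * R = R * Matrix.diagonal dv := mul_col_eq colv dv hcol
  have hBR : (-(sympJ 2 K * Rᵀ * sympJ 2 K)) * R = 1 := by
    calc (-(sympJ 2 K * Rᵀ * sympJ 2 K)) * R
        = -(sympJ 2 K * (Rᵀ * sympJ 2 K * R)) := by noncomm_ring
    _ = 1 := by rw [hgram, sympJ_mul_self, neg_neg]
  have hdetR : IsUnit R.det := Matrix.isUnit_det_of_left_inverse hBR
  have hRsymp : IsSymplectic R := by
    have hRt : IsSymplectic Rᵀ := by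
      rw [IsSymplectic, Matrix.transpose_transpose]; exact hgram
    simpa [Matrix.transpose_transpose] using symp_transpose hRt
  have hconj : R⁻¹ * P * R = Matrix.diagonal dv := by
    rw [Matrix.mul_assoc, hPR, ← Matrix.mul_assoc, Matrix.nonsing_inv_mul R hdetR, one_mul]
  -- explicit block pieces
  set Dm : Matrix (Fin 2) (Fin 2) K := !![(1:K), 0; 0, -1] with hDm
  have hD2 : Matrix.diagonal ![(1:K), -1] = Dm := by
    ext i j; fin_cases i <;> fin_cases j <;> simp [hDm, Matrix.diagonal]
  have hPdiag : Matrix.diagonal dv = Matrix.fromBlocks Dm 0 0 Dm := by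
    rw [hdv, ← Matrix.fromBlocks_diagonal, hD2]
  set S : Matrix (Fin 2) (Fin 2) K := !![0, (2:K)⁻¹; (2:K)⁻¹, 0] with hS
  set T : Matrix (Fin 2) (Fin 2) K := !![-(M 0 1), M 0 0 - 1; M 0 0 - 1, M 1 0] with hT
  have hSt : Sᵀ = S := by ext i j; fin_cases i <;> fin_cases j <;> simp [hS]
  have hTt : Tᵀ = T := by ext i j; fin_cases i <;> fin_cases j <;> simp [hT]
  set U := Matrix.fromBlocks (1 : Matrix (Fin 2) (Fin 2) K) T (0 : Matrix (Fin 2) (Fin 2) K) (1 : Matrix (Fin 2) (Fin 2) K) with hU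
  set U' := Matrix.fromBlocks (1 : Matrix (Fin 2) (Fin 2) K) (-T) (0 : Matrix (Fin 2) (Fin 2) K) (1 : Matrix (Fin 2) (Fin 2) K) with hU'
  set L := Matrix.fromBlocks (1 : Matrix (Fin 2) (Fin 2) K) (0 : Matrix (Fin 2) (Fin 2) K) S (1 : Matrix (Fin 2) (Fin 2) K) with hL
  set L' := Matrix.fromBlocks (1 : Matrix (Fin 2) (Fin 2) K) (0 : Matrix (Fin 2) (Fin 2) K) (-S) (1 : Matrix (Fin 2) (Fin 2) K) with hL'
  have hUsymp : IsSymplectic U := by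
    rw [IsSymplectic, sympJ, hU, Matrix.fromBlocks_transpose, Matrix.fromBlocks_multiply,
      Matrix.fromBlocks_multiply, Matrix.transpose_one, Matrix.transpose_zero, hTt]
    simp
  have hLsymp : IsSymplectic L := by
    rw [IsSymplectic, sympJ, hL, Matrix.fromBlocks_transpose, Matrix.fromBlocks_multiply,
      Matrix.fromBlocks_multiply, Matrix.transpose_one, Matrix.transpose_zero, hSt]
    simp
  have hUU' : U * U' = 1 := by
    rw [hU, hU', Matrix.fromBlocks_multiply, ← Matrix.fromBlocks_one]
    simp
  have hLL' : L * L' = 1 := by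
    rw [hL, hL', Matrix.fromBlocks_multiply, ← Matrix.fromBlocks_one]
    simp
  have hUinv : U⁻¹ = U' := Matrix.inv_eq_right_inv hUU'
  have hLinv : L⁻¹ = L' := Matrix.inv_eq_right_inv hLL'
  refine ⟨U * L * R⁻¹, symp_mul (symp_mul hUsymp hLsymp) (symp_inv hRsymp), ?_⟩
  have hQinv : (U * L * R⁻¹)⁻¹ = R * (L' * U') := by
    rw [Matrix.mul_inv_rev, Matrix.mul_inv_rev, Matrix.nonsing_inv_nonsing_inv R hdetR,
      hUinv, hLinv]
  have hfinal : U * L * R⁻¹ * P * (U * L * R⁻¹)⁻¹ = U * L * (R⁻¹ * P * R) * (L' * U') := by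
    rw [hQinv]; noncomm_ring
  rw [hfinal, hconj, hPdiag, hU, hL, hL', hU',
    Matrix.fromBlocks_multiply, Matrix.fromBlocks_multiply, Matrix.fromBlocks_multiply,
    Matrix.fromBlocks_multiply, Matrix.toBlocks_fromBlocks₁₁]
  have hM11 : M 1 1 = -(M 0 0) := by
    have h := htr
    rw [Matrix.trace_fin_two] at h
    exact eq_neg_of_add_eq_zero_right h
  ext i j
  fin_cases i <;> fin_cases j <;>
    (simp [hS, hT, hDm, Matrix.mul_apply, Fin.sum_univ_two, hM11]; field_simp; ring)
end
end
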